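/- arXiv:2508.11853 — 9 statements merged into one kernel-verified Lean document; each statement's English description precedes it below -/
import Mathlib

section
/- Let $P_0,P_1,P_2$ be affinely independent points in the plane, and let $Q_0,Q_1,Q_2$ lie in the interiors of the segments $P_1P_2$, $P_2P_0$, $P_0P_1$ respectively. Then the three segments $P_0Q_0$, $P_1Q_1$, $P_2Q_2$ have a common point if and only if $\frac{|P_0Q_1|}{|Q_1P_2|}\cdot\frac{|P_2Q_0|}{|Q_0P_1|}\cdot\frac{|P_1Q_2|}{|Q_2P_0|}=1$. -/
private lemma seg_dist₁ (x y : EuclideanSpace ℝ (Fin 2)) {a b : ℝ} (hb : 0 ≤ b)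
    (hab : a + b = 1) : dist (a • x + b • y) x = b * dist x y := by
  rw [dist_eq_norm, dist_eq_norm]
  have ha : a = 1 - b := by linarith
  subst ha
  have h : (1 - b) • x + b • y - x = -(b • (x - y)) := by module
  rw [h, norm_neg, norm_smul, Real.norm_eq_abs, abs_of_nonneg hb]

private lemma seg_dist₂ (x y : EuclideanSpace ℝ (Fin 2)) {a b : ℝ} (ha : 0 ≤ a)
    (hab : a + b = 1) : dist (a • x + b • y) y = a * dist x y := by
  rw [dist_eq_norm, dist_eq_norm]
  have hb : b = 1 - a := by linarith
  subst hb
  have h : a • x + (1 - a) • y - y = a • (x - y) := by module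
  rw [h, norm_smul, Real.norm_eq_abs, abs_of_nonneg ha]

private lemma coords_unique {P : Fin 3 → EuclideanSpace ℝ (Fin 2)}
    (hP : AffineIndependent ℝ P) {s t s' t' : ℝ}
    (h : s • (P 1 - P 0) + t • (P 2 - P 0) = s' • (P 1 - P 0) + t' • (P 2 - P 0)) :
    s = s' ∧ t = t' := by
  rw [affineIndependent_iff] at hP
  have h0 := hP Finset.univ ![-(s - s' + (t - t')), s - s', t - t']
    (by simp [Fin.sum_univ_three]; ring)
    (by
      simp only [Fin.sum_univ_three]
      show (-(s - s' + (t - t'))) • P 0 + (s - s') • P 1 + (t - t') • P 2 = 0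
      linear_combination (norm := module) h)
  have h1 := h0 1 (Finset.mem_univ _)
  have h2 := h0 2 (Finset.mem_univ _)
  simp at h1 h2
  constructor <;> linarith

set_option maxHeartbeats 1000000 in
theorem ceva_classical
    (P : Fin 3 → EuclideanSpace ℝ (Fin 2))
    (hP : AffineIndependent ℝ P)
    (Q₀ Q₁ Q₂ : EuclideanSpace ℝ (Fin 2))
    (hQ₀ : Q₀ ∈ openSegment ℝ (P 1) (P 2))
    (hQ₁ : Q₁ ∈ openSegment ℝ (P 2) (P 0))
    (hQ₂ : Q₂ ∈ openSegment ℝ (P 0) (P 1)) :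
    (∃ X, X ∈ segment ℝ (P 0) Q₀ ∧ X ∈ segment ℝ (P 1) Q₁ ∧ X ∈ segment ℝ (P 2) Q₂) ↔
      (dist (P 0) Q₁ / dist Q₁ (P 2)) * (dist (P 2) Q₀ / dist Q₀ (P 1)) *
        (dist (P 1) Q₂ / dist Q₂ (P 0)) = 1 := by
  obtain ⟨a₀, b₀, ha₀, hb₀, hab₀, hQ₀eq⟩ := hQ₀
  obtain ⟨a₁, b₁, ha₁, hb₁, hab₁, hQ₁eq⟩ := hQ₁
  obtain ⟨a₂, b₂, ha₂, hb₂, hab₂, hQ₂eq⟩ := hQ₂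
  have hd20 : (0:ℝ) < dist (P 2) (P 0) := dist_pos.2 (hP.injective.ne (by decide))
  have hd12 : (0:ℝ) < dist (P 1) (P 2) := dist_pos.2 (hP.injective.ne (by decide))
  have hd01 : (0:ℝ) < dist (P 0) (P 1) := dist_pos.2 (hP.injective.ne (by decide))
  have hd1 : dist (P 0) Q₁ = a₁ * dist (P 2) (P 0) := by
    rw [dist_comm, ← hQ₁eq]; exact seg_dist₂ _ _ ha₁.le hab₁
  have hd2 : dist Q₁ (P 2) = b₁ * dist (P 2) (P 0) := by
    rw [← hQ₁eq]; exact seg_dist₁ _ _ hb₁.le hab₁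
  have hd3 : dist (P 2) Q₀ = a₀ * dist (P 1) (P 2) := by
    rw [dist_comm, ← hQ₀eq]; exact seg_dist₂ _ _ ha₀.le hab₀
  have hd4 : dist Q₀ (P 1) = b₀ * dist (P 1) (P 2) := by
    rw [← hQ₀eq]; exact seg_dist₁ _ _ hb₀.le hab₀
  have hd5 : dist (P 1) Q₂ = a₂ * dist (P 0) (P 1) := by
    rw [dist_comm, ← hQ₂eq]; exact seg_dist₂ _ _ ha₂.le hab₂
  have hd6 : dist Q₂ (P 0) = b₂ * dist (P 0) (P 1) := by
    rw [← hQ₂eq]; exact seg_dist₁ _ _ hb₂.le hab₂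
  have hiff : (dist (P 0) Q₁ / dist Q₁ (P 2)) * (dist (P 2) Q₀ / dist Q₀ (P 1)) *
        (dist (P 1) Q₂ / dist Q₂ (P 0)) = 1 ↔ a₀ * a₁ * a₂ = b₀ * b₁ * b₂ := by
    rw [hd1, hd2, hd3, hd4, hd5, hd6]
    rw [mul_div_mul_right _ _ hd20.ne', mul_div_mul_right _ _ hd12.ne',
      mul_div_mul_right _ _ hd01.ne', div_mul_div_comm, div_mul_div_comm,
      div_eq_one_iff_eq (by exact (mul_pos (mul_pos hb₁ hb₀) hb₂).ne')]
    constructor <;> intro h <;> linear_combination h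
  rw [hiff]
  constructor
  · rintro ⟨X, ⟨e, f, he, hf, hef, hE1⟩, ⟨g, h, hg, hh, hgh, hE2⟩, ⟨i, j, hi, hj, hij, hE3⟩⟩
    rw [← hQ₀eq] at hE1
    rw [← hQ₁eq] at hE2
    rw [← hQ₂eq] at hE3
    have hF : f * a₀ + f * b₀ = f := by linear_combination f * hab₀
    have hH : h * a₁ + h * b₁ = h := by linear_combination h * hab₁
    have hJ : j * a₂ + j * b₂ = j := by linear_combination j * hab₂
    have r1 : X - P 0 = (f * a₀) • (P 1 - P 0) + (f * b₀) • (P 2 - P 0) := by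
      rw [← hE1]; match_scalars <;> linarith
    have r2 : X - P 0 = g • (P 1 - P 0) + (h * a₁) • (P 2 - P 0) := by
      rw [← hE2]; match_scalars <;> linarith
    have r3 : X - P 0 = (j * b₂) • (P 1 - P 0) + i • (P 2 - P 0) := by
      rw [← hE3]; match_scalars <;> linarith
    obtain ⟨k1, k2⟩ := coords_unique hP (r1.symm.trans r2)
    obtain ⟨k3, k4⟩ := coords_unique hP (r1.symm.trans r3)
    have hfpos : 0 < f := by
      rcases eq_or_lt_of_le hf with hf0 | hf0
      · exfalso
        have hg0 : g = 0 := by nlinarith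
        have hh0 : h = 0 := by nlinarith
        linarith
      · exact hf0
    have hha : 0 < h * a₁ := by rw [← k2]; exact mul_pos hfpos hb₀
    have hhpos : 0 < h := by nlinarith
    have hjb : 0 < j * b₂ := by rw [← k3]; exact mul_pos hfpos ha₀
    have hjpos : 0 < j := by nlinarith
    have e5 : h * b₁ = 1 - f := by
      linear_combination h * hab₁ + k2 - f * hab₀ + k1 + hgh
    have e6 : j * a₂ = 1 - f := by
      linear_combination j * hab₂ + k3 - f * hab₀ + k4 + hij
    have hfhj : f * h * j ≠ 0 := (mul_pos (mul_pos hfpos hhpos) hjpos).ne'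
    have hmain : f * h * j * (a₀ * a₁ * a₂) = f * h * j * (b₀ * b₁ * b₂) := by
      linear_combination (-(f * a₀ * j * a₂)) * k2 + (f * a₀ * f * b₀) * e6
        - (f * b₀ * j * b₂) * e5 + (f * b₀ * (1 - f)) * k3
    exact mul_left_cancel₀ hfhj hmain
  · intro hcond
    set S : ℝ := b₀ * b₁ + a₀ * a₁ + b₀ * a₁ with hS
    have hSpos : 0 < S :=
      add_pos (add_pos (mul_pos hb₀ hb₁) (mul_pos ha₀ ha₁)) (mul_pos hb₀ ha₁)
    refine ⟨(b₀ * b₁ / S) • P 0 + (a₁ / S) • (a₀ • P 1 + b₀ • P 2), ?_, ?_, ?_⟩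
    · refine ⟨b₀ * b₁ / S, a₁ / S, le_of_lt (div_pos (mul_pos hb₀ hb₁) hSpos),
        le_of_lt (div_pos ha₁ hSpos), ?_, by rw [← hQ₀eq]⟩
      rw [← add_div, div_eq_one_iff_eq hSpos.ne']
      linear_combination (-a₁) * hab₀
    · refine ⟨a₀ * a₁ / S, b₀ / S, le_of_lt (div_pos (mul_pos ha₀ ha₁) hSpos),
        le_of_lt (div_pos hb₀ hSpos), ?_, ?_⟩
      · rw [← add_div, div_eq_one_iff_eq hSpos.ne']
        linear_combination (-b₀) * hab₁
      · rw [← hQ₁eq]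
        match_scalars <;> ring
    · refine ⟨b₀ * a₁ / S, (b₀ * b₁ + a₀ * a₁) / S, le_of_lt (div_pos (mul_pos hb₀ ha₁) hSpos),
        le_of_lt (div_pos (add_pos (mul_pos hb₀ hb₁) (mul_pos ha₀ ha₁)) hSpos), ?_, ?_⟩
      · rw [← add_div, div_eq_one_iff_eq hSpos.ne']
        ring
      · rw [← hQ₂eq]
        match_scalars
        · ring
        · linear_combination (hcond + b₀ * b₁ * hab₂) / S
        · linear_combination (-hcond + a₀ * a₁ * hab₂) / S
end

section
/- Let $P_0,\dots,P_n$ be affinely independent in $\mathbb{R}^n$, fix $1\le l<n$, and for each $t\in\{0,\dots,l\}$ let $Q_t$ be a point in the convex hull of $\{P_j : j\in\{0,\dots,l\},\ j\neq t\}$. Define the $k$-cevian $C_t$ as the convex hull of $\{Q_t, P_t, P_{l+1},\dots,P_n\}$ (so $k=n-l$). If a point $X$ with all barycentric coordinates (with respect to $P_0,\dots,P_n$) strictly positive lies in $C_t$ for every $t\in\{0,\dots,l\}$, then there exists a point $\hat X$ lying in the segment $Q_t P_t$ (convex hull of $\{Q_t,P_t\}$) for every $t\in\{0,\dots,l\}$.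 -/
/-!
The common point is the centre of mass `X̂` of the face vertices `P₀, …, P_l` with the
barycentric weights `α` of `X`. With `L = {0, …, l}`, write `X ∈ C_t` as
`X = a Q_t + Σ_{m ∉ L∖{t}} c_m P_m` and `Q_t = Σ_{j ∈ L∖{t}} q_j P_j`; by uniqueness of
barycentric coordinates `α = a q + c`, so the face part `Σ_{j ∈ L} α_j P_j` equals
`a Q_t + α_t P_t`, and after normalising it lies on the segment `Q_t P_t`.
-/

open Finset

section ConvexWeights

variable {ι R E : Type*} [Fintype ι] [Semiring R] [PartialOrder R] [IsOrderedRing R]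
  [AddCommMonoid E] [Module R E]

theorem exists_weights_of_mem_convexHull_image {f : ι → E} {A : Set ι} {x : E}
    (hx : x ∈ convexHull R (f '' A)) :
    ∃ w : ι → R, (∀ i, 0 ≤ w i) ∧ (∀ i ∉ A, w i = 0) ∧ ∑ i, w i = 1 ∧
      ∑ i, w i • f i = x := by
  classical
  suffices h : convexHull R (f '' A) ⊆ {y | ∃ w : ι → R, (∀ i, 0 ≤ w i) ∧ (∀ i ∉ A, w i = 0) ∧
      ∑ i, w i = 1 ∧ ∑ i, w i • f i = y} from h hx
  refine convexHull_min ?_ ?_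
  · rintro _ ⟨i, hi, rfl⟩
    exact ⟨Pi.single i 1, Pi.single_nonneg.2 zero_le_one,
      fun j hj => Pi.single_eq_of_ne (ne_of_mem_of_not_mem hi hj).symm 1, by simp, by simp⟩
  · rintro _ ⟨w, hw₀, hwA, hw₁, rfl⟩ _ ⟨w', hw₀', hwA', hw₁', rfl⟩ a b ha hb hab
    refine ⟨fun i => a * w i + b * w' i, fun i => ?_, fun i hi => ?_, ?_, ?_⟩
    · have := hw₀ i; have := hw₀' i; positivity
    · simp [hwA i hi, hwA' i hi]
    · simp [sum_add_distrib, ← mul_sum, hw₁, hw₁', hab]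
    · simp [add_smul, mul_smul, sum_add_distrib, smul_sum]

theorem exists_weights_of_mem_convexHull_insert_image {f : ι → E} {B : Set ι} {y x : E}
    (hx : x ∈ convexHull R (insert y (f '' B))) :
    ∃ (a : R) (c : ι → R), 0 ≤ a ∧ (∀ i, 0 ≤ c i) ∧ (∀ i ∉ B, c i = 0) ∧
      a + ∑ i, c i = 1 ∧ a • y + ∑ i, c i • f i = x := by
  have himage : insert y (f '' B) = Option.elim' y f '' insert none (some '' B) := by
    rw [Set.image_insert_eq, Set.image_image]; rfl
  rw [himage] at hx
  obtain ⟨w, hw₀, hwB, hw₁, hwx⟩ := exists_weights_of_mem_convexHull_image hx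
  refine ⟨w none, fun i => w (some i), hw₀ none, fun i => hw₀ (some i), fun i hi => ?_, ?_, ?_⟩
  · exact hwB (some i) (by simpa using hi)
  · simpa [Fintype.sum_option] using hw₁
  · simpa [Fintype.sum_option] using hwx

end ConvexWeights

theorem AffineIndependent.exists_face_sum_eq_of_mem_cevian {ι R E : Type*} [Fintype ι]
    [DecidableEq ι] [Ring R] [PartialOrder R] [IsOrderedRing R] [AddCommGroup E] [Module R E]
    {P : ι → E} (hP : AffineIndependent R P) {α : ι → R} (hα : ∑ i, α i = 1)
    {L : Finset ι} {t : ι} (ht : t ∈ L) {Q : E}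
    (hQ : Q ∈ convexHull R (P '' ↑(L.erase t)))
    (hX : ∑ i, α i • P i ∈ convexHull R (insert Q (P '' insert t (↑L)ᶜ))) :
    ∃ a b : R, 0 ≤ a ∧ 0 ≤ b ∧ ∑ i ∈ L, α i = a + b ∧
      ∑ i ∈ L, α i • P i = a • Q + b • P t := by
  obtain ⟨q, -, hqL, hq₁, hqQ⟩ := exists_weights_of_mem_convexHull_image hQ
  obtain ⟨a, c, ha, hc, hcL, hac, hacX⟩ := exists_weights_of_mem_convexHull_insert_image hX
  have hα_eq : ∀ i, α i = a * q i + c i := fun i =>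
    hP.eq_of_sum_eq_sum (s := univ) (w₂ := fun i => a * q i + c i)
      (by simp [sum_add_distrib, ← mul_sum, hq₁, hac, hα])
      (by simp [add_smul, mul_smul, sum_add_distrib, ← smul_sum, hqQ, hacX]) i (mem_univ i)
  have hq_off : ∀ i ∈ univ, i ∉ L → q i = 0 := fun i _ hi => hqL i (by simp [hi])
  have hc_on : ∀ i ∈ L, i ≠ t → c i = 0 := fun i hi hit => hcL i (by simp [hi, hit])
  refine ⟨a, c t, ha, hc t, ?_, ?_⟩
  · simp only [hα_eq, sum_add_distrib, ← mul_sum]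
    rw [sum_subset (subset_univ L) hq_off, hq₁, mul_one, sum_eq_single_of_mem t ht hc_on]
  · simp only [hα_eq, add_smul, mul_smul, sum_add_distrib, ← smul_sum]
    rw [sum_subset (subset_univ L) (fun i hi hiL => by simp [hq_off i hi hiL]), hqQ,
      sum_eq_single_of_mem t ht (fun i hi hit => by simp [hc_on i hi hit])]

theorem Finset.centerMass_mem_segment_of_sum_smul_eq {ι 𝕜 E : Type*} [Field 𝕜] [LinearOrder 𝕜]
    [IsStrictOrderedRing 𝕜] [AddCommGroup E] [Module 𝕜 E] {s : Finset ι} {w : ι → 𝕜}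
    {p : ι → E} {a b : 𝕜} {x y : E} (ha : 0 ≤ a) (hb : 0 ≤ b) (hab : 0 < a + b)
    (hw : ∑ i ∈ s, w i = a + b) (hwp : ∑ i ∈ s, w i • p i = a • x + b • y) :
    s.centerMass w p ∈ segment 𝕜 x y := by
  rw [mem_segment_iff_div]
  refine ⟨a, b, ha, hb, hab, ?_⟩
  rw [centerMass, hw, hwp, smul_add, smul_smul, smul_smul, div_eq_inv_mul, div_eq_inv_mul]

theorem common_point_projects_to_induced_cevians_general
    (n l : ℕ)
    (P : Fin (n + 1) → EuclideanSpace ℝ (Fin n))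
    (hP : AffineIndependent ℝ P)
    (Q : Fin (n + 1) → EuclideanSpace ℝ (Fin n))
    (hQ : ∀ t : Fin (n + 1), (t : ℕ) ≤ l →
      Q t ∈ convexHull ℝ (P '' {j | (j : ℕ) ≤ l ∧ j ≠ t}))
    (X : EuclideanSpace ℝ (Fin n))
    (α : Fin (n + 1) → ℝ)
    (hαpos : ∀ i, 0 < α i) (hαsum : ∑ i, α i = 1)
    (hX : X = ∑ i, α i • P i)
    (hXC : ∀ t : Fin (n + 1), (t : ℕ) ≤ l →
      X ∈ convexHull ℝ ({Q t, P t} ∪ P '' {m | l < (m : ℕ)})) :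
    ∃ Xhat, ∀ t : Fin (n + 1), (t : ℕ) ≤ l → Xhat ∈ segment ℝ (Q t) (P t) := by
  set L : Finset (Fin (n + 1)) := univ.filter fun j => (j : ℕ) ≤ l
  refine ⟨L.centerMass α P, fun t ht => ?_⟩
  have htL : t ∈ L := by simpa [L] using ht
  have hface : {j : Fin (n + 1) | (j : ℕ) ≤ l ∧ j ≠ t} = ↑(L.erase t) := by
    ext j; simp [L]
  have hcevian : {Q t, P t} ∪ P '' {m : Fin (n + 1) | l < (m : ℕ)} =
      insert (Q t) (P '' insert t (↑L)ᶜ) := by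
    ext y; simp [L, or_assoc, eq_comm]
  obtain ⟨a, b, ha, hb, hsum, hsmul⟩ := hP.exists_face_sum_eq_of_mem_cevian hαsum htL
    (hface ▸ hQ t ht) (hX ▸ hcevian ▸ hXC t ht)
  have hpos : 0 < a + b := hsum ▸ sum_pos (fun i _ => hαpos i) ⟨t, htL⟩
  exact centerMass_mem_segment_of_sum_smul_eq ha hb hpos hsum hsmul

theorem common_point_projects_to_induced_cevians
    (n l : ℕ) (hl1 : 1 ≤ l) (hln : l < n)
    (P : Fin (n + 1) → EuclideanSpace ℝ (Fin n))
    (hP : AffineIndependent ℝ P)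
    (Q : Fin (n + 1) → EuclideanSpace ℝ (Fin n))
    (hQ : ∀ t : Fin (n + 1), (t : ℕ) ≤ l →
      Q t ∈ convexHull ℝ (P '' {j | (j : ℕ) ≤ l ∧ j ≠ t}))
    (X : EuclideanSpace ℝ (Fin n))
    (α : Fin (n + 1) → ℝ)
    (hαpos : ∀ i, 0 < α i) (hαsum : ∑ i, α i = 1)
    (hX : X = ∑ i, α i • P i)
    (hXC : ∀ t : Fin (n + 1), (t : ℕ) ≤ l →
      X ∈ convexHull ℝ ({Q t, P t} ∪ P '' {m | l < (m : ℕ)})) :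
    ∃ Xhat, ∀ t : Fin (n + 1), (t : ℕ) ≤ l → Xhat ∈ segment ℝ (Q t) (P t) :=
  common_point_projects_to_induced_cevians_general n l P hP Q hQ X α hαpos hαsum hX hXC
end

section
/- Let $P_0,P_1,P_2,P_3$ be affinely independent points in $\mathbb{R}^3$ (a tetrahedron). For each pair $i<j$ let $Q_{\{i,j\}}$ lie in the open segment $P_iP_j$, and for each pair $\{i,j\}$ with complement $\{k,l\}$ define the 2-cevian $C_{\{i,j\}}=\mathrm{conv}\{Q_{\{i,j\}},P_k,P_l\}$. Suppose for every triple $i<j<k$ the Ceva products $\frac{|P_iQ_{\{i,j\}}|}{|Q_{\{i,j\}}P_j|}\cdot\frac{|P_jQ_{\{j,k\}}|}{|Q_{\{j,k\}}P_k|}\cdot\frac{|P_kQ_{\{i,k\}}|}{|Q_{\{i,k\}}P_i|}=1$ hold. Then the six 2-cevians $C_{\{i,j\}}$ have a common point. -/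
open AffineMap Set Finset

theorem tetrahedron_two_cevians_concurrent
    (P : Fin 4 → EuclideanSpace ℝ (Fin 3))
    (hP : AffineIndependent ℝ P)
    (Q : Fin 4 → Fin 4 → EuclideanSpace ℝ (Fin 3))
    (hQ : ∀ i j : Fin 4, i < j → Q i j ∈ openSegment ℝ (P i) (P j))
    (hceva : ∀ i j k : Fin 4, i < j → j < k →
      (dist (P i) (Q i j) / dist (Q i j) (P j)) *
        (dist (P j) (Q j k) / dist (Q j k) (P k)) *
        (dist (P k) (Q i k) / dist (Q i k) (P i)) = 1) :
    ∃ X, ∀ i j : Fin 4, i < j →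
      X ∈ convexHull ℝ ({Q i j} ∪ P '' {m | m ≠ i ∧ m ≠ j}) := by
  classical
  have hPinj : Function.Injective P := hP.injective
  have hd : ∀ i j : Fin 4, i < j → dist (P i) (P j) ≠ 0 := by
    intro i j hij
    exact dist_ne_zero.2 fun h => (hij.ne (hPinj h)).elim
  have hEx : ∀ i j : Fin 4, i < j →
      ∃ c : ℝ, c ∈ Set.Ioo (0:ℝ) 1 ∧ Q i j = lineMap (P i) (P j) c := by
    intro i j hij
    have h := hQ i j hij
    rw [openSegment_eq_image_lineMap] at h
    obtain ⟨c, hc, hcq⟩ := h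
    exact ⟨c, hc, hcq.symm⟩
  choose t ht hQt using hEx
  -- ratio lemmas
  have hr1 : ∀ i j (hij : i < j),
      dist (P i) (Q i j) / dist (Q i j) (P j) = t i j hij / (1 - t i j hij) := by
    intro i j hij
    obtain ⟨h0, h1⟩ := ht i j hij
    rw [hQt i j hij, dist_left_lineMap, dist_lineMap_right,
      Real.norm_eq_abs, Real.norm_eq_abs, abs_of_pos h0, abs_of_pos (by linarith : (0:ℝ) < 1 - t i j hij),
      mul_div_mul_right _ _ (hd i j hij)]
  have hr2 : ∀ i j (hij : i < j),
      dist (P j) (Q i j) / dist (Q i j) (P i) = (1 - t i j hij) / t i j hij := by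
    intro i j hij
    obtain ⟨h0, h1⟩ := ht i j hij
    rw [hQt i j hij, dist_right_lineMap, dist_lineMap_left,
      Real.norm_eq_abs, Real.norm_eq_abs, abs_of_pos h0, abs_of_pos (by linarith : (0:ℝ) < 1 - t i j hij),
      mul_div_mul_right _ _ (hd i j hij)]
  -- multiplicative relation
  have hrel : ∀ i j k (hij : i < j) (hjk : j < k),
      (t i j hij / (1 - t i j hij)) * (t j k hjk / (1 - t j k hjk))
        = t i k (hij.trans hjk) / (1 - t i k (hij.trans hjk)) := by
    intro i j k hij hjk
    have h := hceva i j k hij hjk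
    rw [hr1 i j hij, hr1 j k hjk, hr2 i k (hij.trans hjk)] at h
    obtain ⟨a0, a1⟩ := ht i j hij
    obtain ⟨b0, b1⟩ := ht j k hjk
    obtain ⟨c0, c1⟩ := ht i k (hij.trans hjk)
    rw [div_mul_div_comm, div_mul_div_comm,
      div_eq_one_iff_eq (mul_ne_zero (mul_ne_zero (by linarith) (by linarith)) (by linarith) :
        (1 - t i j hij) * (1 - t j k hjk) * t i k (hij.trans hjk) ≠ 0)] at h
    rw [div_mul_div_comm, div_eq_div_iff (mul_ne_zero (by linarith) (by linarith)) (by linarith)]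
    linear_combination h
  -- weights
  set w : Fin 4 → ℝ := fun i =>
    if h : (0 : Fin 4) < i then t 0 i h / (1 - t 0 i h) else 1 with hw_def
  have hwpos : ∀ i, 0 < w i := by
    intro i
    show (0:ℝ) < if h : (0 : Fin 4) < i then t 0 i h / (1 - t 0 i h) else 1
    by_cases h : (0 : Fin 4) < i
    · rw [dif_pos h]
      obtain ⟨h0, h1⟩ := ht 0 i h
      exact div_pos h0 (by linarith)
    · rw [dif_neg h]; norm_num
  have hwt : ∀ i j (hij : i < j), t i j hij = w j / (w i + w j) := by
    intro i j hij
    have hj0 : (0 : Fin 4) < j := lt_of_le_of_lt (Fin.zero_le i) hij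
    by_cases hi0 : (0 : Fin 4) < i
    · -- i > 0 : use hrel 0 i j
      have hrel0 := hrel 0 i j hi0 hij
      have hwj : w j = t 0 j hj0 / (1 - t 0 j hj0) := dif_pos hj0
      have hwi : w i = t 0 i hi0 / (1 - t 0 i hi0) := dif_pos hi0
      obtain ⟨a0, a1⟩ := ht 0 i hi0
      obtain ⟨b0, b1⟩ := ht i j hij
      obtain ⟨c0, c1⟩ := ht 0 j hj0
      have hc0j : t 0 j (hi0.trans hij) = t 0 j hj0 := rfl
      rw [hc0j] at hrel0
      have a1' : (1:ℝ) - t 0 i hi0 ≠ 0 := by linarith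
      have b1' : (1:ℝ) - t i j hij ≠ 0 := by linarith
      have c1' : (1:ℝ) - t 0 j hj0 ≠ 0 := by linarith
      rw [div_mul_div_comm, div_eq_div_iff (mul_ne_zero a1' b1') c1'] at hrel0
      rw [hwi, hwj]
      have h1a : (1 : ℝ) - t 0 i hi0 ≠ 0 := by linarith
      have h1b : (1 : ℝ) - t i j hij ≠ 0 := by linarith
      have h1c : (1 : ℝ) - t 0 j hj0 ≠ 0 := by linarith
      have hden : (0:ℝ) < t 0 i hi0 / (1 - t 0 i hi0) + t 0 j hj0 / (1 - t 0 j hj0) := by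
        have := div_pos a0 (by linarith : (0:ℝ) < 1 - t 0 i hi0)
        have := div_pos c0 (by linarith : (0:ℝ) < 1 - t 0 j hj0)
        linarith
      rw [eq_div_iff (ne_of_gt hden)]
      field_simp
      first
        | linear_combination hrel0
        | linear_combination (-1 : ℝ) * hrel0
        | linear_combination (1 - t 0 i hi0) * hrel0
        | nlinarith [hrel0]
    · have hi : i = 0 := by
        have := Fin.zero_le i
        omega
      subst hi
      have hwj : w j = t 0 j hj0 / (1 - t 0 j hj0) := dif_pos hj0
      have hwi : w 0 = 1 := dif_neg (lt_irrefl _)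
      obtain ⟨c0, c1⟩ := ht 0 j hj0
      have hc : t 0 j hj0 = t 0 j hij := rfl
      rw [hwi, hwj, ← hc]
      have h1c : (1 : ℝ) - t 0 j hj0 ≠ 0 := by linarith
      field_simp
      ring
  set W : ℝ := w 0 + w 1 + w 2 + w 3 with hW_def
  have hWpos : 0 < W := by
    have := hwpos 0; have := hwpos 1; have := hwpos 2; have := hwpos 3
    rw [hW_def]; linarith
  have hWne : W ≠ 0 := ne_of_gt hWpos
  -- key combination identity
  have hkey : ∀ i j (hij : i < j),
      (w i / W) • Q i j + (w j / W) • Q i j = (w i / W) • P i + (w j / W) • P j := by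
    intro i j hij
    have hsum : w i + w j ≠ 0 := by
      have := hwpos i; have := hwpos j; intro h; linarith
    rw [hQt i j hij, hwt i j hij, lineMap_apply_module]
    match_scalars <;> field_simp [hsum] <;> ring
  refine ⟨∑ m : Fin 4, (w m / W) • P m, ?_⟩
  intro i j hij
  set S : Set (EuclideanSpace ℝ (Fin 3)) := {Q i j} ∪ P '' {m | m ≠ i ∧ m ≠ j} with hS_def
  set g : Fin 4 → EuclideanSpace ℝ (Fin 3) :=
    fun m => if m = i ∨ m = j then Q i j else P m with hg_def
  have hmem : (∑ m : Fin 4, (w m / W) • g m) ∈ convexHull ℝ S := by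
    apply (convex_convexHull ℝ S).sum_mem
    · intro m _
      exact div_nonneg (hwpos m).le hWpos.le
    · rw [Fin.sum_univ_four, ← add_div, ← add_div, ← add_div, ← hW_def,
        div_self hWne]
    · intro m _
      show (if m = i ∨ m = j then Q i j else P m) ∈ convexHull ℝ S
      by_cases h : m = i ∨ m = j
      · rw [if_pos h]
        exact subset_convexHull ℝ S (Or.inl rfl)
      · rw [if_neg h]
        push_neg at h
        exact subset_convexHull ℝ S (Or.inr ⟨m, ⟨h.1, h.2⟩, rfl⟩)
  have hXeq : (∑ m : Fin 4, (w m / W) • P m) = ∑ m : Fin 4, (w m / W) • g m := by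
    have h1 : ∀ m : Fin 4, (w m / W) • g m = (w m / W) • P m +
        ((if m = i then (w i / W) • Q i j - (w i / W) • P i else 0) +
         (if m = j then (w j / W) • Q i j - (w j / W) • P j else 0)) := by
      intro m
      show (w m / W) • (if m = i ∨ m = j then Q i j else P m) = _
      by_cases h1 : m = i
      · subst h1; rw [if_pos (Or.inl rfl), if_pos rfl, if_neg hij.ne]; abel
      · by_cases h2 : m = j
        · subst h2; rw [if_pos (Or.inr rfl), if_neg h1, if_pos rfl]; abel
        · rw [if_neg (by tauto), if_neg h1, if_neg h2]; abel
    rw [Finset.sum_congr rfl (fun m _ => h1 m), Finset.sum_add_distrib, Finset.sum_add_distrib,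
      Finset.sum_ite_eq', Finset.sum_ite_eq', if_pos (Finset.mem_univ i),
      if_pos (Finset.mem_univ j)]
    have hk := hkey i j hij
    have h0 : ((w i / W) • Q i j - (w i / W) • P i) + ((w j / W) • Q i j - (w j / W) • P j)
        = 0 := by
      rw [sub_add_sub_comm, hk, sub_self]
    rw [h0, add_zero]
  rw [hXeq]
  exact hmem
end

section
/- Let $P_0,P_1,P_2,P_3$ be affinely independent points in $\mathbb{R}^3$. Let $Q_{\{0,1\}},Q_{\{0,2\}},Q_{\{0,3\}}$ lie in the open segments $P_0P_1$, $P_0P_2$, $P_0P_3$ respectively, let $Q_{\{1,2,3\}}$ lie in the relative interior of the triangle $P_1P_2P_3$, and for $1\le i<j\le 3$ let $Q_{\{i,j\}}$ be the point where the line through $P_k$ ($k\in\{1,2,3\}\setminus\{i,j\}$) and $Q_{\{1,2,3\}}$ meets the segment $P_iP_j$. Consider the family $\mathfrak{R}=\{\mathrm{conv}\{Q_{\{0,1\}},P_2,P_3\},\ \mathrm{conv}\{Q_{\{0,2\}},P_1,P_3\},\ \mathrm{conv}\{Q_{\{0,3\}},P_1,P_2\},\ \mathrm{conv}\{Q_{\{1,2,3\}},P_0\}\}$.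 Then $\bigcap\mathfrak{R}\neq\emptyset$ if and only if for all $0\le i<j<k\le 3$ one has $\frac{|P_iQ_{\{i,j\}}|}{|Q_{\{i,j\}}P_j|}\cdot\frac{|P_jQ_{\{j,k\}}|}{|Q_{\{j,k\}}P_k|}\cdot\frac{|P_kQ_{\{i,k\}}|}{|Q_{\{i,k\}}P_i|}=1$. -/
noncomputable section CevTetra
open Filter Topology

local notation "E3" => EuclideanSpace ℝ (Fin 3)

lemma distComboLeft (x y : E3) (u v : ℝ) (h : u + v = 1) :
    dist x (u • x + v • y) = |v| * dist x y := by
  have hu : u = 1 - v := by linarith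
  subst hu
  rw [dist_eq_norm, dist_eq_norm, ← Real.norm_eq_abs, ← norm_smul]
  congr 1
  module

lemma distComboRight (x y : E3) (u v : ℝ) (h : u + v = 1) :
    dist (u • x + v • y) y = |u| * dist x y := by
  have hv : v = 1 - u := by linarith
  subst hv
  rw [dist_eq_norm, dist_eq_norm, ← Real.norm_eq_abs, ← norm_smul]
  congr 1
  module

lemma bary4 (P : Fin 4 → E3) (hP : AffineIndependent ℝ P)
    (a0 a1 a2 a3 b0 b1 b2 b3 : ℝ) (ha : a0+a1+a2+a3 = 1) (hb : b0+b1+b2+b3 = 1)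
    (h : a0 • P 0 + a1 • P 1 + a2 • P 2 + a3 • P 3 = b0 • P 0 + b1 • P 1 + b2 • P 2 + b3 • P 3) :
    a0 = b0 ∧ a1 = b1 ∧ a2 = b2 ∧ a3 = b3 := by
  rw [affineIndependent_iff] at hP
  have key := hP Finset.univ ![a0-b0, a1-b1, a2-b2, a3-b3] ?_ ?_
  · refine ⟨sub_eq_zero.mp ?_, sub_eq_zero.mp ?_, sub_eq_zero.mp ?_, sub_eq_zero.mp ?_⟩
    · simpa using key 0 (Finset.mem_univ _)
    · simpa using key 1 (Finset.mem_univ _)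
    · simpa using key 2 (Finset.mem_univ _)
    · simpa using key 3 (Finset.mem_univ _)
  · simp only [Fin.sum_univ_four, Matrix.cons_val_zero, Matrix.cons_val_one, Matrix.head_cons]
    simp only [Matrix.cons_val_two, Matrix.cons_val_three, Matrix.tail_cons, Matrix.head_cons]
    linarith
  · simp only [Fin.sum_univ_four, Matrix.cons_val_zero, Matrix.cons_val_one, Matrix.head_cons,
      Matrix.cons_val_two, Matrix.cons_val_three, Matrix.tail_cons]
    have e : (a0-b0) • P 0 + (a1-b1) • P 1 + (a2-b2) • P 2 + (a3-b3) • P 3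
        = (a0 • P 0 + a1 • P 1 + a2 • P 2 + a3 • P 3)
          - (b0 • P 0 + b1 • P 1 + b2 • P 2 + b3 • P 3) := by module
    rw [e, h, sub_self]

lemma memTriangleIff (a b c x : E3) :
    x ∈ convexHull ℝ ({a, b, c} : Set (EuclideanSpace ℝ (Fin 3))) ↔
      ∃ α β γ : ℝ, 0 ≤ α ∧ 0 ≤ β ∧ 0 ≤ γ ∧ α + β + γ = 1 ∧ α • a + β • b + γ • c = x := by
  constructor
  · intro hx
    rw [show ({a,b,c} : Set E3) = insert a {b,c} from rfl,
      convexHull_insert ⟨b, by simp⟩, mem_convexJoin] at hx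
    obtain ⟨a', ha', z, hz, hxz⟩ := hx
    rw [Set.mem_singleton_iff] at ha'
    subst ha'
    rw [convexHull_pair] at hz
    obtain ⟨β', γ', hβ', hγ', hsum', rfl⟩ := hz
    obtain ⟨α', t, hα, ht, hsum, hx⟩ := hxz
    exact ⟨α', t*β', t*γ', hα, by positivity, by positivity, by nlinarith,
      by rw [← hx]; module⟩
  · rintro ⟨α, β, γ, hα, hβ, hγ, hsum, rfl⟩
    have := (convex_convexHull ℝ ({a,b,c} : Set E3)).sum_mem (t := Finset.univ)
      (w := ![α,β,γ]) (z := ![a,b,c]) ?_ ?_ ?_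
    · simpa [Fin.sum_univ_three] using this
    · intro i _; fin_cases i <;> simpa
    · simp [Fin.sum_univ_three]; linarith
    · intro i _; fin_cases i <;>
        exact subset_convexHull ℝ _ (by simp)


lemma faceQ (x y w q z : E3)
    (huniq : ∀ c1 c2 c3 d1 d2 d3 : ℝ, c1+c2+c3 = 1 → d1+d2+d3 = 1 →
      c1 • x + c2 • y + c3 • w = d1 • x + d2 • y + d3 • w → c1 = d1 ∧ c2 = d2 ∧ c3 = d3)
    (b1 b2 b3 : ℝ) (hb1 : 0 < b1) (hb2 : 0 < b2) (hb3 : 0 < b3)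
    (hsum : b1 + b2 + b3 = 1) (hq : b1 • x + b2 • y + b3 • w = q)
    (hz : z ∈ segment ℝ x y) (hcol : Collinear ℝ ({w, q, z} : Set (EuclideanSpace ℝ (Fin 3)))) :
    z = (b1 / (b1+b2)) • x + (b2 / (b1+b2)) • y := by
  have hqw : q ≠ w := by
    intro h
    have h2 : b1 • x + b2 • y + b3 • w = (0:ℝ) • x + (0:ℝ) • y + (1:ℝ) • w := by
      rw [hq, h]; module
    have := (huniq b1 b2 b3 0 0 1 hsum (by norm_num) h2).1
    exact hb1.ne' this
  rw [collinear_iff_of_mem (Set.mem_insert w _)] at hcol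
  obtain ⟨v, hv⟩ := hcol
  obtain ⟨r1, hr1⟩ := hv q (by simp)
  obtain ⟨r2, hr2⟩ := hv z (by simp)
  simp only [vadd_eq_add] at hr1 hr2
  have hr1ne : r1 ≠ 0 := by
    intro h0
    exact hqw (by rw [hr1, h0, zero_smul, zero_add])
  obtain ⟨s, t, hs, ht, hst, hzc⟩ := hz
  set c := r2 / r1 with hc
  have e2 : z = c • q + (1 - c) • w := by
    rw [hr2, hr1]
    match_scalars
    · rw [hc]; field_simp
    · ring
  have e3 : s • x + t • y + (0:ℝ) • w
      = (c*b1) • x + (c*b2) • y + (c*b3 + 1 - c) • w := by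
    have : s • x + t • y + (0:ℝ) • w = z := by rw [← hzc]; module
    rw [this, e2, ← hq]; module
  obtain ⟨h1, h2, h3⟩ := huniq s t 0 (c*b1) (c*b2) (c*b3+1-c)
    (by linarith) (by linear_combination c * hsum) e3
  have hb12 : 0 < b1 + b2 := by linarith
  have hcb : c * (b1 + b2) = 1 := by linear_combination c * hsum + h3
  have hs1 : s = b1 / (b1+b2) := by
    rw [eq_div_iff hb12.ne']
    linear_combination (b1+b2) * h1 + b1 * hcb
  have ht1 : t = b2 / (b1+b2) := by
    rw [eq_div_iff hb12.ne']
    linear_combination (b1+b2) * h2 + b2 * hcb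
  rw [← hzc, hs1, ht1]


lemma triPos (x y w q : E3)
    (huniq : ∀ c1 c2 c3 d1 d2 d3 : ℝ, c1+c2+c3 = 1 → d1+d2+d3 = 1 →
      c1 • x + c2 • y + c3 • w = d1 • x + d2 • y + d3 • w → c1 = d1 ∧ c2 = d2 ∧ c3 = d3)
    (hq : q ∈ intrinsicInterior ℝ (convexHull ℝ ({x, y, w} : Set (EuclideanSpace ℝ (Fin 3))))) :
    ∃ b1 b2 b3 : ℝ, 0 < b1 ∧ 0 < b2 ∧ 0 < b3 ∧ b1 + b2 + b3 = 1 ∧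
      b1 • x + b2 • y + b3 • w = q := by
  set S : Set E3 := convexHull ℝ ({x, y, w} : Set E3) with hS
  have hqS : q ∈ S := intrinsicInterior_subset hq
  obtain ⟨b1, b2, b3, hb1n, hb2n, hb3n, hsum, hcombo⟩ := (memTriangleIff x y w q).mp hqS
  have key : ∀ z : E3, z ∈ S → ∃ t : ℝ, 0 < t ∧ t • (q - z) + q ∈ S := by
    intro z hzS
    obtain ⟨y0, hy0, hy0q⟩ := mem_intrinsicInterior.mp hq
    have hqspan : q ∈ affineSpan ℝ S := subset_affineSpan ℝ S hqS
    have hzspan : z ∈ affineSpan ℝ S := subset_affineSpan ℝ S hzS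
    have hmem : ∀ t : ℝ, t • (q - z) + q ∈ affineSpan ℝ S := by
      intro t
      have := AffineSubspace.smul_vsub_vadd_mem (affineSpan ℝ S) t hqspan hzspan hqspan
      simpa [vsub_eq_sub, vadd_eq_add] using this
    set ψ : ℝ → (affineSpan ℝ S) := fun t => ⟨t • (q - z) + q, hmem t⟩ with hψ
    have hcont : Continuous ψ := by
      apply Continuous.subtype_mk
      fun_prop
    have hψ0 : ψ 0 = y0 := by
      apply Subtype.ext
      simp [hψ, hy0q]
    have hev : ∀ᶠ t in 𝓝 (0:ℝ), ψ t ∈ interior ((↑) ⁻¹' S : Set (affineSpan ℝ S)) := by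
      refine hcont.continuousAt.eventually_mem (isOpen_interior.mem_nhds ?_)
      rw [hψ0]; exact hy0
    have hev2 : ∀ᶠ t in 𝓝 (0:ℝ), t • (q - z) + q ∈ S :=
      hev.mono fun t ht => (interior_subset ht : ψ t ∈ ((↑) ⁻¹' S : Set (affineSpan ℝ S)))
    obtain ⟨t, htS, htpos⟩ :=
      ((hev2.filter_mono nhdsWithin_le_nhds).and
        (eventually_mem_nhdsWithin (a := (0:ℝ)) (s := Set.Ioi (0:ℝ)))).exists
    exact ⟨t, htpos, htS⟩
  have pos1 : 0 < b1 := by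
    obtain ⟨t, htpos, htS⟩ := key x (subset_convexHull ℝ _ (by simp))
    obtain ⟨c1, c2, c3, hc1, hc2, hc3, hcs, hcc⟩ := (memTriangleIff x y w _).mp htS
    have heq : c1 • x + c2 • y + c3 • w
        = ((1+t)*b1 - t) • x + ((1+t)*b2) • y + ((1+t)*b3) • w := by
      rw [hcc, ← hcombo]; module
    have := (huniq c1 c2 c3 _ _ _ hcs (by linear_combination (1+t) * hsum) heq).1
    nlinarith
  have pos2 : 0 < b2 := by
    obtain ⟨t, htpos, htS⟩ := key y (subset_convexHull ℝ _ (by simp))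
    obtain ⟨c1, c2, c3, hc1, hc2, hc3, hcs, hcc⟩ := (memTriangleIff x y w _).mp htS
    have heq : c1 • x + c2 • y + c3 • w
        = ((1+t)*b1) • x + ((1+t)*b2 - t) • y + ((1+t)*b3) • w := by
      rw [hcc, ← hcombo]; module
    have := (huniq c1 c2 c3 _ _ _ hcs (by linear_combination (1+t) * hsum) heq).2.1
    nlinarith
  have pos3 : 0 < b3 := by
    obtain ⟨t, htpos, htS⟩ := key w (subset_convexHull ℝ _ (by simp))
    obtain ⟨c1, c2, c3, hc1, hc2, hc3, hcs, hcc⟩ := (memTriangleIff x y w _).mp htS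
    have heq : c1 • x + c2 • y + c3 • w
        = ((1+t)*b1) • x + ((1+t)*b2) • y + ((1+t)*b3 - t) • w := by
      rw [hcc, ← hcombo]; module
    have := (huniq c1 c2 c3 _ _ _ hcs (by linear_combination (1+t) * hsum) heq).2.2
    nlinarith
  exact ⟨b1, b2, b3, pos1, pos2, pos3, hsum, hcombo⟩


set_option maxHeartbeats 2000000 in
theorem mixed_dimension_cevians_tetrahedron
    (P : Fin 4 → EuclideanSpace ℝ (Fin 3))
    (hP : AffineIndependent ℝ P)
    (Q : Fin 4 → Fin 4 → EuclideanSpace ℝ (Fin 3))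
    (Q123 : EuclideanSpace ℝ (Fin 3))
    (hQ0 : ∀ j : Fin 4, 0 < j → Q 0 j ∈ openSegment ℝ (P 0) (P j))
    (hQ123 : Q123 ∈ intrinsicInterior ℝ (convexHull ℝ {P 1, P 2, P 3}))
    (hQij : ∀ i j k : Fin 4, 0 < i → i < j → k ≠ 0 → k ≠ i → k ≠ j →
      Q i j ∈ segment ℝ (P i) (P j) ∧ Collinear ℝ {P k, Q123, Q i j}) :
    (∃ X, X ∈ convexHull ℝ {Q 0 1, P 2, P 3} ∧ X ∈ convexHull ℝ {Q 0 2, P 1, P 3} ∧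
        X ∈ convexHull ℝ {Q 0 3, P 1, P 2} ∧ X ∈ segment ℝ Q123 (P 0)) ↔
      (∀ i j k : Fin 4, i < j → j < k →
        (dist (P i) (Q i j) / dist (Q i j) (P j)) *
          (dist (P j) (Q j k) / dist (Q j k) (P k)) *
          (dist (P k) (Q i k) / dist (Q i k) (P i)) = 1) := by
  classical
  have U4 : ∀ a0 a1 a2 a3 b0 b1 b2 b3 : ℝ, a0+a1+a2+a3 = 1 → b0+b1+b2+b3 = 1 →
      a0 • P 0 + a1 • P 1 + a2 • P 2 + a3 • P 3 = b0 • P 0 + b1 • P 1 + b2 • P 2 + b3 • P 3 →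
      a0 = b0 ∧ a1 = b1 ∧ a2 = b2 ∧ a3 = b3 :=
    fun a0 a1 a2 a3 b0 b1 b2 b3 ha hb h => bary4 P hP a0 a1 a2 a3 b0 b1 b2 b3 ha hb h
  have U123 : ∀ c1 c2 c3 d1 d2 d3 : ℝ, c1+c2+c3 = 1 → d1+d2+d3 = 1 →
      c1 • P 1 + c2 • P 2 + c3 • P 3 = d1 • P 1 + d2 • P 2 + d3 • P 3 →
      c1 = d1 ∧ c2 = d2 ∧ c3 = d3 := by
    intro c1 c2 c3 d1 d2 d3 hc hd h
    have h' : (0:ℝ) • P 0 + c1 • P 1 + c2 • P 2 + c3 • P 3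
        = (0:ℝ) • P 0 + d1 • P 1 + d2 • P 2 + d3 • P 3 := by
      calc (0:ℝ) • P 0 + c1 • P 1 + c2 • P 2 + c3 • P 3
          = c1 • P 1 + c2 • P 2 + c3 • P 3 := by module
        _ = d1 • P 1 + d2 • P 2 + d3 • P 3 := h
        _ = (0:ℝ) • P 0 + d1 • P 1 + d2 • P 2 + d3 • P 3 := by module
    have := U4 0 c1 c2 c3 0 d1 d2 d3 (by linarith) (by linarith) h'
    exact ⟨this.2.1, this.2.2.1, this.2.2.2⟩
  have U132 : ∀ c1 c2 c3 d1 d2 d3 : ℝ, c1+c2+c3 = 1 → d1+d2+d3 = 1 →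
      c1 • P 1 + c2 • P 3 + c3 • P 2 = d1 • P 1 + d2 • P 3 + d3 • P 2 →
      c1 = d1 ∧ c2 = d2 ∧ c3 = d3 := by
    intro c1 c2 c3 d1 d2 d3 hc hd h
    have h' : c1 • P 1 + c3 • P 2 + c2 • P 3 = d1 • P 1 + d3 • P 2 + d2 • P 3 := by
      calc c1 • P 1 + c3 • P 2 + c2 • P 3 = c1 • P 1 + c2 • P 3 + c3 • P 2 := by module
        _ = d1 • P 1 + d2 • P 3 + d3 • P 2 := h
        _ = d1 • P 1 + d3 • P 2 + d2 • P 3 := by module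
    have := U123 c1 c3 c2 d1 d3 d2 (by linarith) (by linarith) h'
    exact ⟨this.1, this.2.2, this.2.1⟩
  have U231 : ∀ c1 c2 c3 d1 d2 d3 : ℝ, c1+c2+c3 = 1 → d1+d2+d3 = 1 →
      c1 • P 2 + c2 • P 3 + c3 • P 1 = d1 • P 2 + d2 • P 3 + d3 • P 1 →
      c1 = d1 ∧ c2 = d2 ∧ c3 = d3 := by
    intro c1 c2 c3 d1 d2 d3 hc hd h
    have h' : c3 • P 1 + c1 • P 2 + c2 • P 3 = d3 • P 1 + d1 • P 2 + d2 • P 3 := by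
      calc c3 • P 1 + c1 • P 2 + c2 • P 3 = c1 • P 2 + c2 • P 3 + c3 • P 1 := by module
        _ = d1 • P 2 + d2 • P 3 + d3 • P 1 := h
        _ = d3 • P 1 + d1 • P 2 + d2 • P 3 := by module
    have := U123 c3 c1 c2 d3 d1 d2 (by linarith) (by linarith) h'
    exact ⟨this.2.1, this.2.2, this.1⟩
  obtain ⟨a1, b1, ha1, hb1, hab1, hQ01⟩ := hQ0 1 (by decide)
  obtain ⟨a2, b2, ha2, hb2, hab2, hQ02⟩ := hQ0 2 (by decide)
  obtain ⟨a3, b3, ha3, hb3, hab3, hQ03⟩ := hQ0 3 (by decide)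
  obtain ⟨β1, β2, β3, hβ1, hβ2, hβ3, hβs, hβc⟩ := triPos (P 1) (P 2) (P 3) Q123 U123 hQ123
  have h12 := hQij 1 2 3 (by decide) (by decide) (by decide) (by decide) (by decide)
  have h13 := hQij 1 3 2 (by decide) (by decide) (by decide) (by decide) (by decide)
  have h23 := hQij 2 3 1 (by decide) (by decide) (by decide) (by decide) (by decide)
  have hQ12 : Q 1 2 = (β1/(β1+β2)) • P 1 + (β2/(β1+β2)) • P 2 :=
    faceQ (P 1) (P 2) (P 3) Q123 (Q 1 2) U123 β1 β2 β3 hβ1 hβ2 hβ3 hβs hβc h12.1 h12.2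
  have hQ13 : Q 1 3 = (β1/(β1+β3)) • P 1 + (β3/(β1+β3)) • P 3 :=
    faceQ (P 1) (P 3) (P 2) Q123 (Q 1 3) U132 β1 β3 β2 hβ1 hβ3 hβ2 (by linarith)
      (by rw [← hβc]; module) h13.1 h13.2
  have hQ23 : Q 2 3 = (β2/(β2+β3)) • P 2 + (β3/(β2+β3)) • P 3 :=
    faceQ (P 2) (P 3) (P 1) Q123 (Q 2 3) U231 β2 β3 β1 hβ2 hβ3 hβ1 (by linarith)
      (by rw [← hβc]; module) h23.1 h23.2
  -- distances
  have hPne : ∀ i j : Fin 4, i ≠ j → (0:ℝ) < dist (P i) (P j) :=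
    fun i j h => dist_pos.mpr (hP.injective.ne h)
  have ha1' := ha1.ne'
  have ha2' := ha2.ne'
  have ha3' := ha3.ne'
  have hb1' := hb1.ne'
  have hb2' := hb2.ne'
  have hb3' := hb3.ne'
  have hβ1' := hβ1.ne'
  have hβ2' := hβ2.ne'
  have hβ3' := hβ3.ne'
  have hs12 : (0:ℝ) < β1 + β2 := by linarith
  have hs13 : (0:ℝ) < β1 + β3 := by linarith
  have hs23 : (0:ℝ) < β2 + β3 := by linarith
  have R01 : dist (P 0) (Q 0 1) / dist (Q 0 1) (P 1) = b1 / a1 := by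
    rw [← hQ01, distComboLeft _ _ _ _ hab1, distComboRight _ _ _ _ hab1,
      abs_of_pos hb1, abs_of_pos ha1, mul_div_mul_right _ _ (hPne 0 1 (by decide)).ne']
  have R02 : dist (P 0) (Q 0 2) / dist (Q 0 2) (P 2) = b2 / a2 := by
    rw [← hQ02, distComboLeft _ _ _ _ hab2, distComboRight _ _ _ _ hab2,
      abs_of_pos hb2, abs_of_pos ha2, mul_div_mul_right _ _ (hPne 0 2 (by decide)).ne']
  have hQ02' : Q 0 2 = b2 • P 2 + a2 • P 0 := by rw [← hQ02]; abel
  have hQ03' : Q 0 3 = b3 • P 3 + a3 • P 0 := by rw [← hQ03]; abel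
  have hba2 : b2 + a2 = 1 := by linarith
  have hba3 : b3 + a3 = 1 := by linarith
  have R20 : dist (P 2) (Q 0 2) / dist (Q 0 2) (P 0) = a2 / b2 := by
    rw [hQ02', distComboLeft _ _ _ _ hba2, distComboRight _ _ _ _ hba2,
      abs_of_pos ha2, abs_of_pos hb2, mul_div_mul_right _ _ (hPne 2 0 (by decide)).ne']
  have R30 : dist (P 3) (Q 0 3) / dist (Q 0 3) (P 0) = a3 / b3 := by
    rw [hQ03', distComboLeft _ _ _ _ hba3, distComboRight _ _ _ _ hba3,
      abs_of_pos ha3, abs_of_pos hb3, mul_div_mul_right _ _ (hPne 3 0 (by decide)).ne']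
  have hcs12 : β1/(β1+β2) + β2/(β1+β2) = 1 := by field_simp
  have hcs13 : β1/(β1+β3) + β3/(β1+β3) = 1 := by field_simp
  have hcs23 : β2/(β2+β3) + β3/(β2+β3) = 1 := by field_simp
  have hcs31 : β3/(β1+β3) + β1/(β1+β3) = 1 := by field_simp; ring
  have R12 : dist (P 1) (Q 1 2) / dist (Q 1 2) (P 2) = β2 / β1 := by
    rw [hQ12, distComboLeft _ _ _ _ hcs12, distComboRight _ _ _ _ hcs12,
      abs_of_pos (by positivity), abs_of_pos (by positivity),
      mul_div_mul_right _ _ (hPne 1 2 (by decide)).ne']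
    rw [div_div_div_cancel_right₀]
    exact hs12.ne'
  have R13 : dist (P 1) (Q 1 3) / dist (Q 1 3) (P 3) = β3 / β1 := by
    rw [hQ13, distComboLeft _ _ _ _ hcs13, distComboRight _ _ _ _ hcs13,
      abs_of_pos (by positivity), abs_of_pos (by positivity),
      mul_div_mul_right _ _ (hPne 1 3 (by decide)).ne']
    rw [div_div_div_cancel_right₀]
    exact hs13.ne'
  have R23 : dist (P 2) (Q 2 3) / dist (Q 2 3) (P 3) = β3 / β2 := by
    rw [hQ23, distComboLeft _ _ _ _ hcs23, distComboRight _ _ _ _ hcs23,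
      abs_of_pos (by positivity), abs_of_pos (by positivity),
      mul_div_mul_right _ _ (hPne 2 3 (by decide)).ne']
    rw [div_div_div_cancel_right₀]
    exact hs23.ne'
  have hQ13' : Q 1 3 = (β3/(β1+β3)) • P 3 + (β1/(β1+β3)) • P 1 := by rw [hQ13]; abel
  have R31 : dist (P 3) (Q 1 3) / dist (Q 1 3) (P 1) = β1 / β3 := by
    rw [hQ13', distComboLeft _ _ _ _ hcs31, distComboRight _ _ _ _ hcs31,
      abs_of_pos (by positivity), abs_of_pos (by positivity),
      mul_div_mul_right _ _ (hPne 3 1 (by decide)).ne']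
    rw [div_div_div_cancel_right₀]
    exact hs13.ne'
  constructor
  · rintro ⟨X, hX1, hX2, hX3, hX4⟩
    obtain ⟨u, v, hu, hv, huv, hXc⟩ := hX4
    obtain ⟨α1, γ1, δ1, hα1, hγ1, hδ1, hsum1, hc1⟩ := (memTriangleIff _ _ _ _).mp hX1
    obtain ⟨α2, γ2, δ2, hα2, hγ2, hδ2, hsum2, hc2⟩ := (memTriangleIff _ _ _ _).mp hX2
    obtain ⟨α3, γ3, δ3, hα3, hγ3, hδ3, hsum3, hc3⟩ := (memTriangleIff _ _ _ _).mp hX3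
    have e1 : (α1*a1) • P 0 + (α1*b1) • P 1 + γ1 • P 2 + δ1 • P 3
        = v • P 0 + (u*β1) • P 1 + (u*β2) • P 2 + (u*β3) • P 3 := by
      calc (α1*a1) • P 0 + (α1*b1) • P 1 + γ1 • P 2 + δ1 • P 3
          = α1 • Q 0 1 + γ1 • P 2 + δ1 • P 3 := by rw [← hQ01]; module
        _ = X := hc1
        _ = u • Q123 + v • P 0 := hXc.symm
        _ = _ := by rw [← hβc]; module
    have e2 : (α2*a2) • P 0 + γ2 • P 1 + (α2*b2) • P 2 + δ2 • P 3
        = v • P 0 + (u*β1) • P 1 + (u*β2) • P 2 + (u*β3) • P 3 := by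
      calc (α2*a2) • P 0 + γ2 • P 1 + (α2*b2) • P 2 + δ2 • P 3
          = α2 • Q 0 2 + γ2 • P 1 + δ2 • P 3 := by rw [← hQ02]; module
        _ = X := hc2
        _ = u • Q123 + v • P 0 := hXc.symm
        _ = _ := by rw [← hβc]; module
    have e3 : (α3*a3) • P 0 + γ3 • P 1 + δ3 • P 2 + (α3*b3) • P 3
        = v • P 0 + (u*β1) • P 1 + (u*β2) • P 2 + (u*β3) • P 3 := by
      calc (α3*a3) • P 0 + γ3 • P 1 + δ3 • P 2 + (α3*b3) • P 3
          = α3 • Q 0 3 + γ3 • P 1 + δ3 • P 2 := by rw [← hQ03]; module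
        _ = X := hc3
        _ = u • Q123 + v • P 0 := hXc.symm
        _ = _ := by rw [← hβc]; module
    obtain ⟨E10, E11, -, -⟩ := U4 _ _ _ _ _ _ _ _
      (by linear_combination α1*hab1 + hsum1) (by linear_combination u*hβs + huv) e1
    obtain ⟨E20, -, E22, -⟩ := U4 _ _ _ _ _ _ _ _
      (by linear_combination α2*hab2 + hsum2) (by linear_combination u*hβs + huv) e2
    obtain ⟨E30, -, -, E33⟩ := U4 _ _ _ _ _ _ _ _
      (by linear_combination α3*hab3 + hsum3) (by linear_combination u*hβs + huv) e3
    have K1 : v*b1 = u*β1*a1 := by linear_combination a1*E11 - b1*E10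
    have K2 : v*b2 = u*β2*a2 := by linear_combination a2*E22 - b2*E20
    have K3 : v*b3 = u*β3*a3 := by linear_combination a3*E33 - b3*E30
    have hune : u ≠ 0 := by
      intro h0
      have hv1 : v = 1 := by linarith
      rw [h0, hv1] at K1
      simp at K1
      linarith
    have cond1 : β1*a1*b2 = β2*a2*b1 :=
      mul_left_cancel₀ hune (by linear_combination b1*K2 - b2*K1)
    have cond2 : β1*a1*b3 = β3*a3*b1 :=
      mul_left_cancel₀ hune (by linear_combination b1*K3 - b3*K1)
    have cond3 : β2*a2*b3 = β3*a3*b2 :=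
      mul_left_cancel₀ hune (by linear_combination b2*K3 - b3*K2)
    intro i j k hij hjk
    have hcase : (i = 0 ∧ j = 1 ∧ k = 2) ∨ (i = 0 ∧ j = 1 ∧ k = 3) ∨
        (i = 0 ∧ j = 2 ∧ k = 3) ∨ (i = 1 ∧ j = 2 ∧ k = 3) := by omega
    rcases hcase with ⟨rfl, rfl, rfl⟩ | ⟨rfl, rfl, rfl⟩ | ⟨rfl, rfl, rfl⟩ | ⟨rfl, rfl, rfl⟩
    · rw [R01, R12, R20, div_mul_div_comm, div_mul_div_comm,
        div_eq_one_iff_eq (by positivity)]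
      linear_combination cond1.symm
    · rw [R01, R13, R30, div_mul_div_comm, div_mul_div_comm,
        div_eq_one_iff_eq (by positivity)]
      linear_combination cond2.symm
    · rw [R02, R23, R30, div_mul_div_comm, div_mul_div_comm,
        div_eq_one_iff_eq (by positivity)]
      linear_combination cond3.symm
    · rw [R12, R23, R31, div_mul_div_comm, div_mul_div_comm,
        div_eq_one_iff_eq (by positivity)]
      ring
  · intro hR
    have t1 := hR 0 1 2 (by decide) (by decide)
    rw [R01, R12, R20] at t1
    have t2 := hR 0 1 3 (by decide) (by decide)
    rw [R01, R13, R30] at t2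
    rw [div_mul_div_comm, div_mul_div_comm,
      div_eq_one_iff_eq (show a1*β1*b2 ≠ 0 by positivity)] at t1
    rw [div_mul_div_comm, div_mul_div_comm,
      div_eq_one_iff_eq (show a1*β1*b3 ≠ 0 by positivity)] at t2
    have cond1 : β1*a1*b2 = β2*a2*b1 := by linear_combination t1.symm
    have cond2 : β1*a1*b3 = β3*a3*b1 := by linear_combination t2.symm
    obtain ⟨D, hD⟩ : ∃ D : ℝ, D = b1*b2*b3 + β1*a1*b2*b3 := ⟨_, rfl⟩
    have hDpos : (0:ℝ) < D := by rw [hD]; positivity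
    refine ⟨(b1*b2*b3/D) • Q123 + (β1*a1*b2*b3/D) • P 0, ?_, ?_, ?_,
      ⟨b1*b2*b3/D, β1*a1*b2*b3/D, by positivity, by positivity, by
        rw [← add_div, ← hD]; exact div_self hDpos.ne', rfl⟩⟩
    · refine (memTriangleIff _ _ _ _).mpr
        ⟨β1*b2*b3/D, b1*b2*b3*β2/D, b1*b2*b3*β3/D, by positivity, by positivity, by positivity,
          ?_, ?_⟩
      · rw [← add_div, ← add_div, div_eq_one_iff_eq hDpos.ne', hD]
        linear_combination (b1*b2*b3)*hβs - (β1*b2*b3)*hab1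
      · rw [← hQ01, ← hβc]
        match_scalars <;> field_simp
        all_goals try ring
    · refine (memTriangleIff _ _ _ _).mpr
        ⟨β2*b1*b3/D, b1*b2*b3*β1/D, b1*b2*b3*β3/D, by positivity, by positivity, by positivity,
          ?_, ?_⟩
      · rw [← add_div, ← add_div, div_eq_one_iff_eq hDpos.ne', hD]
        linear_combination (b1*b2*b3)*hβs - (β2*b1*b3)*hab2 - b3*cond1
      · rw [← hQ02, ← hβc]
        match_scalars <;> field_simp
        all_goals try ring
        all_goals linear_combination cond1.symm
    · refine (memTriangleIff _ _ _ _).mpr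
        ⟨β3*b1*b2/D, b1*b2*b3*β1/D, b1*b2*b3*β2/D, by positivity, by positivity, by positivity,
          ?_, ?_⟩
      · rw [← add_div, ← add_div, div_eq_one_iff_eq hDpos.ne', hD]
        linear_combination (b1*b2*b3)*hβs - (β3*b1*b2)*hab3 - b2*cond2
      · rw [← hQ03, ← hβc]
        match_scalars <;> field_simp
        all_goals try ring
        all_goals linear_combination cond2.symm

end CevTetra
end

section
/- Let $P_0,\dots,P_n$ be affinely independent in $\mathbb{R}^n$, and let $X=\sum_{i=0}^n \alpha_i P_i$ with all $\alpha_i > 0$, $\sum \alpha_i = 1$. Fix $1\le l<n$ and $t\in\{0,\dots,l\}$, and let $Q_t$ lie in $\mathrm{conv}\{P_j : j\le l, j\neq t\}$. Then $X\in\mathrm{conv}\{Q_t,P_t,P_{l+1},\dots,P_n\}$ if and only if $Q_t = \frac{1}{\sum_{j\le l, j\neq t}\alpha_j}\sum_{j\le l,\ j\neq t}\alpha_j P_j$. -/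
/-!
Replacing the face points `P j`, `j ∈ S`, by `Q = ∑ j ∈ S, β j • P j` turns an affine combination
of `Q` (weight `a`) and the remaining vertices into an affine combination of all the `P i`, with
weight `a * β j` at `j ∈ S`. By uniqueness of barycentric coordinates these weights are the `α j`,
so `a = ∑ j ∈ S, α j` and `β j = α j / a`. Conversely, grouping the `S`-terms of `∑ i, α i • P i`
exhibits it as a convex combination of their centre of mass and the remaining vertices.
-/

open Finset

variable {ι k 𝕜 E : Type*} [AddCommGroup E] {P : ι → E}

section Ring

variable [Ring k] [Module k E]

theorem exists_sum_smul_eq_of_mem_affineSpan_image {S : Finset ι} {Q : E}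
    (hQ : Q ∈ affineSpan k (P '' S)) :
    ∃ β : ι → k, ∑ i ∈ S, β i = 1 ∧ Q = ∑ i ∈ S, β i • P i := by
  obtain ⟨s, w, hsS, hw, rfl⟩ := eq_affineCombination_of_mem_affineSpan_image hQ
  have hsS : s ⊆ S := by exact_mod_cast hsS
  have hw' : ∑ i ∈ S, (s : Set ι).indicator w i = 1 := by rwa [sum_indicator_subset _ hsS]
  exact ⟨_, hw', by rw [affineCombination_indicator_subset w P hsS,
    affineCombination_eq_linear_combination _ _ _ hw']⟩

variable [Fintype ι]

theorem AffineIndependent.eq_of_sum_smul_eq (hP : AffineIndependent k P) {γ α : ι → k}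
    (hγ : ∑ i, γ i = 1) (hα : ∑ i, α i = 1) (h : ∑ i, γ i • P i = ∑ i, α i • P i) : γ = α := by
  refine (affineIndependent_iff_eq_of_fintype_affineCombination_eq k P).mp hP γ α hγ hα ?_
  rwa [univ.affineCombination_eq_linear_combination _ _ hγ,
    univ.affineCombination_eq_linear_combination _ _ hα]

variable [DecidableEq ι]

theorem sum_smul_piecewise_eq {S : Finset ι} {β : ι → k} {Q : E}
    (hQ : Q = ∑ i ∈ S, β i • P i) (w : ι → k) :
    ∑ i, w i • S.piecewise (fun _ => Q) P i =
      ∑ i, S.piecewise (fun i => (∑ j ∈ S, w j) * β i) w i • P i := by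
  rw [← sum_add_sum_compl S, ← sum_add_sum_compl S (fun i => _ • P i)]
  congr 1
  · rw [sum_congr rfl fun i hi => by rw [piecewise_eq_of_mem _ _ _ hi], ← sum_smul, hQ, smul_sum]
    refine sum_congr rfl fun i hi => ?_
    rw [piecewise_eq_of_mem _ _ _ hi, mul_smul]
  · refine sum_congr rfl fun i hi => ?_
    have hi : i ∉ S := mem_compl.mp hi
    rw [piecewise_eq_of_notMem _ _ _ hi, piecewise_eq_of_notMem _ _ _ hi]

theorem sum_piecewise_mul_eq {S : Finset ι} {β : ι → k} (hβ : ∑ i ∈ S, β i = 1) (w : ι → k) :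
    ∑ i, S.piecewise (fun i => (∑ j ∈ S, w j) * β i) w i = ∑ i, w i := by
  rw [sum_piecewise, univ_inter, ← mul_sum, hβ, mul_one, ← compl_eq_univ_sdiff,
    sum_add_sum_compl]

end Ring

variable [Fintype ι] [DecidableEq ι]

section Field

variable [Field 𝕜] [Module 𝕜 E]

theorem eq_centerMass_of_sum_smul_mem_affineSpan (hP : AffineIndependent 𝕜 P) {α : ι → 𝕜}
    (hα : ∑ i, α i = 1) {S : Finset ι} (hS : ∑ i ∈ S, α i ≠ 0) {Q : E}
    (hQ : Q ∈ affineSpan 𝕜 (P '' S))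
    (hX : ∑ i, α i • P i ∈ affineSpan 𝕜 (insert Q (P '' ↑Sᶜ))) : Q = S.centerMass α P := by
  obtain ⟨β, hβ1, hβ⟩ := exists_sum_smul_eq_of_mem_affineSpan_image hQ
  obtain ⟨i₀, hi₀⟩ := nonempty_of_sum_ne_zero hS
  have hsub : insert Q (P '' ↑Sᶜ) ⊆ Set.range (S.piecewise (fun _ => Q) P) := by
    rintro _ (rfl | ⟨i, hi, rfl⟩)
    · exact ⟨i₀, piecewise_eq_of_mem _ _ _ hi₀⟩
    · exact ⟨i, piecewise_eq_of_notMem _ _ _ (by simpa using hi)⟩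
  obtain ⟨w, hw1, hwX⟩ :=
    eq_affineCombination_of_mem_affineSpan_of_fintype (affineSpan_mono 𝕜 hsub hX)
  rw [affineCombination_eq_linear_combination _ _ _ hw1, sum_smul_piecewise_eq hβ] at hwX
  have hcoord := hP.eq_of_sum_smul_eq ((sum_piecewise_mul_eq hβ1 w).trans hw1) hα hwX.symm
  have hcoef : ∀ i ∈ S, (∑ j ∈ S, w j) * β i = α i := fun i hi => by
    rw [← hcoord, piecewise_eq_of_mem _ _ _ hi]
  have hmass : ∑ j ∈ S, w j = ∑ j ∈ S, α j := by
    rw [← sum_congr rfl hcoef, ← mul_sum, hβ1, mul_one]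
  rw [hβ, centerMass, smul_sum]
  refine sum_congr rfl fun i hi => ?_
  rw [smul_smul, ← hcoef i hi, hmass, inv_mul_cancel_left₀ hS]

end Field

section LinearOrderedField

variable [Field 𝕜] [LinearOrder 𝕜] [IsStrictOrderedRing 𝕜] [Module 𝕜 E]

theorem sum_smul_mem_convexHull_insert_centerMass {α : ι → 𝕜} (hα0 : ∀ i, 0 ≤ α i)
    (hα1 : ∑ i, α i = 1) {S : Finset ι} (hS : ∑ i ∈ S, α i ≠ 0) :
    ∑ i, α i • P i ∈ convexHull 𝕜 (insert (S.centerMass α P) (P '' ↑Sᶜ)) := by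
  have hcollapse : ∑ i, α i • S.piecewise (fun _ => S.centerMass α P) P i = ∑ i, α i • P i := by
    rw [← sum_add_sum_compl S, ← sum_add_sum_compl S (fun i => _ • P i)]
    congr 1
    · rw [sum_congr rfl fun i hi => by rw [piecewise_eq_of_mem _ _ _ hi], ← sum_smul, centerMass,
        smul_inv_smul₀ hS]
    · exact sum_congr rfl fun i hi => by rw [piecewise_eq_of_notMem _ _ _ (mem_compl.mp hi)]
  rw [← hcollapse]
  refine (convex_convexHull 𝕜 _).sum_mem (fun i _ => hα0 i) hα1 fun i _ => subset_convexHull 𝕜 _ ?_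
  by_cases hi : i ∈ S
  · rw [piecewise_eq_of_mem _ _ _ hi]
    exact Set.mem_insert _ _
  · rw [piecewise_eq_of_notMem _ _ _ hi]
    exact Set.mem_insert_of_mem _ ⟨i, by simpa using hi, rfl⟩

theorem sum_smul_mem_convexHull_insert_iff (hP : AffineIndependent 𝕜 P) {α : ι → 𝕜}
    (hα0 : ∀ i, 0 < α i) (hα1 : ∑ i, α i = 1) {S : Finset ι} {Q : E}
    (hQ : Q ∈ convexHull 𝕜 (P '' S)) :
    ∑ i, α i • P i ∈ convexHull 𝕜 (insert Q (P '' ↑Sᶜ)) ↔ Q = S.centerMass α P := by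
  have hS : S.Nonempty := by
    simpa using (convexHull_nonempty_iff (𝕜 := 𝕜)).mp ⟨Q, hQ⟩
  have hσ : ∑ i ∈ S, α i ≠ 0 := (sum_pos (fun i _ => hα0 i) hS).ne'
  constructor
  · exact fun hX => eq_centerMass_of_sum_smul_mem_affineSpan hP hα1 hσ
      (convexHull_subset_affineSpan _ hQ) (convexHull_subset_affineSpan _ hX)
  · rintro rfl
    exact sum_smul_mem_convexHull_insert_centerMass (fun i => (hα0 i).le) hα1 hσ

end LinearOrderedField

theorem cevian_membership_characterization_general
    (n l : ℕ)
    (P : Fin (n + 1) → EuclideanSpace ℝ (Fin n))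
    (hP : AffineIndependent ℝ P)
    (X : EuclideanSpace ℝ (Fin n))
    (α : Fin (n + 1) → ℝ) (hαpos : ∀ i, 0 < α i) (hαsum : ∑ i, α i = 1)
    (hX : X = ∑ i, α i • P i)
    (t : Fin (n + 1))
    (Qt : EuclideanSpace ℝ (Fin n))
    (hQt : Qt ∈ convexHull ℝ (P '' {j | (j : ℕ) ≤ l ∧ j ≠ t})) :
    X ∈ convexHull ℝ ({Qt, P t} ∪ P '' {m | l < (m : ℕ)}) ↔
      Qt = (∑ j ∈ Finset.univ.filter (fun j : Fin (n + 1) => (j : ℕ) ≤ l ∧ j ≠ t), α j)⁻¹ •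
        ∑ j ∈ Finset.univ.filter (fun j : Fin (n + 1) => (j : ℕ) ≤ l ∧ j ≠ t), α j • P j := by
  set S := univ.filter fun j : Fin (n + 1) => (j : ℕ) ≤ l ∧ j ≠ t
  have hface : {j : Fin (n + 1) | (j : ℕ) ≤ l ∧ j ≠ t} = (S : Set (Fin (n + 1))) := by simp [S]
  have hapexes : {Qt, P t} ∪ P '' {m | l < (m : ℕ)} = insert Qt (P '' ↑Sᶜ) := by
    rw [Set.insert_union, Set.singleton_union, ← Set.image_insert_eq]
    congr 2
    ext m
    simp only [Set.mem_insert_iff, Set.mem_ofPred_eq, coe_compl, coe_filter, mem_univ, true_and,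
      Set.mem_compl_iff, not_and, not_not, S]
    rw [Fin.ext_iff]
    omega
  rw [hface] at hQt
  rw [hX, hapexes]
  exact sum_smul_mem_convexHull_insert_iff hP hαpos hαsum hQt

theorem cevian_membership_characterization
    (n l : ℕ) (hl1 : 1 ≤ l) (hln : l < n)
    (P : Fin (n + 1) → EuclideanSpace ℝ (Fin n))
    (hP : AffineIndependent ℝ P)
    (X : EuclideanSpace ℝ (Fin n))
    (α : Fin (n + 1) → ℝ) (hαpos : ∀ i, 0 < α i) (hαsum : ∑ i, α i = 1)
    (hX : X = ∑ i, α i • P i)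
    (t : Fin (n + 1)) (ht : (t : ℕ) ≤ l)
    (Qt : EuclideanSpace ℝ (Fin n))
    (hQt : Qt ∈ convexHull ℝ (P '' {j | (j : ℕ) ≤ l ∧ j ≠ t})) :
    X ∈ convexHull ℝ ({Qt, P t} ∪ P '' {m | l < (m : ℕ)}) ↔
      Qt = (∑ j ∈ Finset.univ.filter (fun j : Fin (n + 1) => (j : ℕ) ≤ l ∧ j ≠ t), α j)⁻¹ •
        ∑ j ∈ Finset.univ.filter (fun j : Fin (n + 1) => (j : ℕ) ≤ l ∧ j ≠ t), α j • P j :=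
  cevian_membership_characterization_general n l P hP X α hαpos hαsum hX t Qt hQt
end

section
/- Let $P_0,\dots,P_n$ be affinely independent in $\mathbb{R}^n$ and let $k+l=n+1$ with $1\le k\le n-1$. For each $k$-element subset $U\subseteq\{0,\dots,n\}$ with complement $U'$, let $Q_{U'}$ lie in the relative interior of $\mathrm{conv}\{P_v : v\in U'\}$ and set $C_U=\mathrm{conv}(\{Q_{U'}\}\cup\{P_u: u\in U\})$. If there exists $X$ with all barycentric coordinates strictly positive lying in every $C_U$, then for every $l$-dimensional face $\mathbf{L}=\mathrm{conv}\{P_j : j\in J\}$ with $|J|=l+1$, the $l+1$ induced segments $\mathrm{conv}\{Q_{J\setminus\{t\}},P_t\}$, $t\in J$, have a common point. -/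
/-- Extract index-based convex weights from membership in the convex hull of an
image of a finset under an injective map. -/
lemma exists_index_weights {ι E : Type*} [DecidableEq ι] [DecidableEq E]
    [AddCommGroup E] [Module ℝ E]
    {P : ι → E} (hinj : Function.Injective P) (S : Finset ι) {x : E}
    (hx : x ∈ convexHull ℝ (P '' ↑S)) :
    ∃ q : ι → ℝ, (∀ i, 0 ≤ q i) ∧ (∀ i ∉ S, q i = 0) ∧
      (∑ i ∈ S, q i = 1) ∧ ∑ i ∈ S, q i • P i = x := by
  classical
  rw [← Finset.coe_image, Finset.convexHull_eq] at hx
  obtain ⟨w, hw0, hw1, hwx⟩ := hx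
  rw [Finset.centerMass_eq_of_sum_1 _ _ hw1] at hwx
  refine ⟨fun i => if i ∈ S then w (P i) else 0, ?_, ?_, ?_, ?_⟩
  · intro i
    by_cases h : i ∈ S
    · simp only [h, if_true]
      exact hw0 _ (Finset.mem_image_of_mem _ h)
    · simp [h]
  · intro i h; simp [h]
  · have h : ∑ i ∈ S, (if i ∈ S then w (P i) else 0) = ∑ i ∈ S, w (P i) :=
      Finset.sum_congr rfl fun i hi => if_pos hi
    rw [h, ← hw1]
    exact (Finset.sum_image (fun a _ b _ h => hinj h)).symm
  · have h : ∑ i ∈ S, (if i ∈ S then w (P i) else 0) • P i = ∑ i ∈ S, w (P i) • P i :=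
      Finset.sum_congr rfl fun i hi => by rw [if_pos hi]
    rw [h, ← hwx, Finset.sum_image (fun a _ b _ h => hinj h)]
    simp

theorem main_theorem_forward
    (n k l : ℕ) (hk1 : 1 ≤ k) (hkn : k ≤ n - 1) (hkl : k + l = n + 1)
    (P : Fin (n + 1) → EuclideanSpace ℝ (Fin n))
    (hP : AffineIndependent ℝ P)
    (Q : Finset (Fin (n + 1)) → EuclideanSpace ℝ (Fin n))
    (hQ : ∀ S : Finset (Fin (n + 1)), S.card = l →
      Q S ∈ intrinsicInterior ℝ (convexHull ℝ (P '' ↑S)))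
    (X : EuclideanSpace ℝ (Fin n))
    (α : Fin (n + 1) → ℝ) (hαpos : ∀ i, 0 < α i) (hαsum : ∑ i, α i = 1)
    (hX : X = ∑ i, α i • P i)
    (hXC : ∀ U : Finset (Fin (n + 1)), U.card = k →
      X ∈ convexHull ℝ ({Q Uᶜ} ∪ P '' ↑U)) :
    ∀ J : Finset (Fin (n + 1)), J.card = l + 1 →
      ∃ Y, ∀ t ∈ J, Y ∈ segment ℝ (Q (J.erase t)) (P t) := by
  classical
  have hn : 2 ≤ n := by omega
  intro J hJ
  have hinj : Function.Injective P := hP.injective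
  set s : ℝ := ∑ j ∈ J, α j with hs_def
  have hJne : J.Nonempty := Finset.card_pos.mp (by omega)
  have hspos : 0 < s := Finset.sum_pos (fun i _ => hαpos i) hJne
  refine ⟨s⁻¹ • ∑ j ∈ J, α j • P j, ?_⟩
  intro t ht
  -- the cevian set U = insert t Jᶜ
  set U : Finset (Fin (n + 1)) := insert t Jᶜ with hU_def
  have htU : t ∉ (Jᶜ : Finset (Fin (n + 1))) := by simp [ht]
  have hUcard : U.card = k := by
    rw [hU_def, Finset.card_insert_of_notMem htU, Finset.card_compl, hJ]
    simp [Fintype.card_fin]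
    omega
  have hUc : Uᶜ = J.erase t := by
    rw [hU_def, Finset.compl_insert, compl_compl]
  have hXU := hXC U hUcard
  rw [hUc] at hXU
  -- decompose X
  have hPUne : (P '' ↑U).Nonempty := by
    refine ⟨P t, Set.mem_image_of_mem _ ?_⟩
    simp [hU_def]
  rw [Set.singleton_union, convexHull_insert hPUne, mem_convexJoin] at hXU
  obtain ⟨y, hy, z, hz, hXseg⟩ := hXU
  rw [Set.mem_singleton_iff] at hy
  subst hy
  obtain ⟨a, b, ha, hb, hab, hXeq⟩ := hXseg
  -- weights for z over U
  obtain ⟨r, hr0, hrout, hr1, hrz⟩ := exists_index_weights hinj U hz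
  -- weights for Q (J.erase t) over J.erase t
  have hQmem : Q (J.erase t) ∈ convexHull ℝ (P '' ↑(J.erase t)) :=
    intrinsicInterior_subset (hQ (J.erase t) (by rw [Finset.card_erase_of_mem ht, hJ]; omega))
  obtain ⟨q, hq0, hqout, hq1, hqQ⟩ := exists_index_weights hinj (J.erase t) hQmem
  -- second weight family
  set w₂ : Fin (n + 1) → ℝ := fun i => if i ∈ J.erase t then a * q i else b * r i with hw2_def
  have hcomplE : (J.erase t)ᶜ = U := by rw [Finset.compl_erase, hU_def]
  have hw2sum : ∑ i, w₂ i = 1 := by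
    rw [← Finset.sum_add_sum_compl (J.erase t), hcomplE]
    have h1 : ∑ i ∈ J.erase t, w₂ i = a := by
      have h : ∑ i ∈ J.erase t, w₂ i = ∑ i ∈ J.erase t, a * q i :=
        Finset.sum_congr rfl fun i hi => by simp only [hw2_def]; rw [if_pos hi]
      rw [h, ← Finset.mul_sum, hq1, mul_one]
    have h2 : ∑ i ∈ U, w₂ i = b := by
      have : ∀ i ∈ U, w₂ i = b * r i := by
        intro i hi
        have : i ∉ J.erase t := by rw [← hcomplE] at hi; exact Finset.mem_compl.mp hi
        simp only [hw2_def, if_neg this]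
      rw [Finset.sum_congr rfl this, ← Finset.mul_sum, hr1, mul_one]
    rw [h1, h2, hab]
  have hw2comb : ∑ i, w₂ i • P i = X := by
    rw [← Finset.sum_add_sum_compl (J.erase t), hcomplE]
    have h1 : ∑ i ∈ J.erase t, w₂ i • P i = a • Q (J.erase t) := by
      have h : ∑ i ∈ J.erase t, w₂ i • P i = ∑ i ∈ J.erase t, (a * q i) • P i :=
        Finset.sum_congr rfl fun i hi => by simp only [hw2_def]; rw [if_pos hi]
      rw [h, ← hqQ, Finset.smul_sum]
      exact Finset.sum_congr rfl fun i _ => by rw [smul_smul]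
    have h2 : ∑ i ∈ U, w₂ i • P i = b • z := by
      have he : ∀ i ∈ U, w₂ i • P i = (b * r i) • P i := by
        intro i hi
        have : i ∉ J.erase t := by rw [← hcomplE] at hi; exact Finset.mem_compl.mp hi
        simp only [hw2_def, if_neg this]
      rw [Finset.sum_congr rfl he, ← hrz, Finset.smul_sum]
      exact Finset.sum_congr rfl fun i _ => by rw [smul_smul]
    rw [h1, h2, hXeq]
  -- uniqueness of barycentric coordinates
  have hind := hP.indicator_eq_of_affineCombination_eq Finset.univ Finset.univ α w₂
    (by simpa using hαsum) (by simpa using hw2sum)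
    (by
      rw [Finset.affineCombination_eq_linear_combination _ _ _ (by simpa using hαsum),
        Finset.affineCombination_eq_linear_combination _ _ _ (by simpa using hw2sum),
        hw2comb, hX])
  have hαw : ∀ i, α i = w₂ i := by
    intro i
    have := congrFun hind i
    simpa using this
  have hkey : ∀ j ∈ J.erase t, α j = a * q j := by
    intro j hj
    rw [hαw j]; simp only [hw2_def, if_pos hj]
  -- a = s - α t  (as a sum identity)
  have haval : a = ∑ j ∈ J.erase t, α j := by
    rw [Finset.sum_congr rfl hkey, ← Finset.mul_sum, hq1, mul_one]
  have haQ : a • Q (J.erase t) = ∑ j ∈ J.erase t, α j • P j := by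
    rw [← hqQ, Finset.smul_sum]
    refine Finset.sum_congr rfl fun j hj => ?_
    rw [smul_smul, ← hkey j hj]
  have hapos : 0 ≤ a := ha
  have hasum : a + α t = s := by
    rw [haval, hs_def, Finset.sum_erase_add _ _ ht]
  -- conclude segment membership
  refine ⟨a / s, α t / s, div_nonneg hapos hspos.le,
    div_nonneg (hαpos t).le hspos.le, ?_, ?_⟩
  · field_simp
    exact hasum
  · rw [div_eq_inv_mul, div_eq_inv_mul, mul_smul, mul_smul, haQ, ← smul_add,
      ← Finset.sum_erase_add _ _ ht]
end

section
/- Let $P_0,\dots,P_n$ be affinely independent in $\mathbb{R}^n$ and $X,Y$ two points each having all barycentric coordinates strictly positive. If for every $i\in\{0,\dots,n\}$ the points $P_i$, $X$, $Y$ are collinear, then $X=Y$. -/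
/-!
If `X ≠ Y`, collinearity of `P i`, `X`, `Y` puts every vertex `P i` on the line `XY`, so the
vertices span an affine subspace of dimension at most one. But `n + 1 ≥ 3` affinely independent
points span a subspace of dimension `n ≥ 2`.
-/

section

variable {k V P ι : Type*} [DivisionRing k] [AddCommGroup V] [Module k V] [AddTorsor V P]

theorem collinear_of_subset_affineSpan_pair {s : Set P} {p₁ p₂ : P}
    (h : s ⊆ line[k, p₁, p₂]) : Collinear k s := by
  have hle : vectorSpan k s ≤ vectorSpan k {p₁, p₂} := by
    simpa only [direction_affineSpan] using AffineSubspace.direction_le (affineSpan_le.2 h)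
  exact (Submodule.rank_mono hle).trans (collinear_pair k p₁ p₂)

theorem collinear_range_of_forall_collinear_insert_pair {p : ι → P} {p₁ p₂ : P} (h : p₁ ≠ p₂)
    (hp : ∀ i, Collinear k {p i, p₁, p₂}) : Collinear k (Set.range p) := by
  refine collinear_of_subset_affineSpan_pair (p₁ := p₁) (p₂ := p₂) ?_
  rintro _ ⟨i, rfl⟩
  exact (hp i).mem_affineSpan_of_mem_of_ne (by simp) (by simp) (by simp) h

theorem AffineIndependent.not_collinear_range [Fintype ι] {p : ι → P}
    (hp : AffineIndependent k p) (hcard : 2 < Fintype.card ι) : ¬Collinear k (Set.range p) := by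
  intro hcol
  have := hcol.finiteDimensional_vectorSpan
  have hdim := hp.finrank_vectorSpan (n := Fintype.card ι - 1) (by omega)
  have hle := hcol.finrank_le_one
  omega

end

theorem interior_points_collinear_with_all_vertices_eq_general
    (n : ℕ) (hn : 2 ≤ n)
    (P : Fin (n + 1) → EuclideanSpace ℝ (Fin n))
    (hP : AffineIndependent ℝ P)
    (X Y : EuclideanSpace ℝ (Fin n))
    (hcol : ∀ i, Collinear ℝ {P i, X, Y}) :
    X = Y := by
  by_contra hXY
  exact hP.not_collinear_range (by rw [Fintype.card_fin]; omega)
    (collinear_range_of_forall_collinear_insert_pair hXY hcol)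

theorem interior_points_collinear_with_all_vertices_eq
    (n : ℕ) (hn : 2 ≤ n)
    (P : Fin (n + 1) → EuclideanSpace ℝ (Fin n))
    (hP : AffineIndependent ℝ P)
    (X Y : EuclideanSpace ℝ (Fin n))
    (α β : Fin (n + 1) → ℝ)
    (hαpos : ∀ i, 0 < α i) (hαsum : ∑ i, α i = 1) (hX : X = ∑ i, α i • P i)
    (hβpos : ∀ i, 0 < β i) (hβsum : ∑ i, β i = 1) (hY : Y = ∑ i, β i • P i)
    (hcol : ∀ i, Collinear ℝ {P i, X, Y}) :
    X = Y :=
  interior_points_collinear_with_all_vertices_eq_general n hn P hP X Y hcol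
end

section
/- Let $P_0,\dots,P_n$ be affinely independent in $\mathbb{R}^n$, let $k+l=n+1$ with $1\le k\le n-1$, and fix an $l$-dimensional face $\mathbf{L}=\mathrm{conv}\{P_j:j\in J\}$, $|J|=l+1$, with complement $J'=\{0,\dots,n\}\setminus J$. For $t\in J$ let $Q_{[t]}$ lie in the relative interior of $\mathrm{conv}\{P_j:j\in J,\ j\neq t\}$ and let $C_t=\mathrm{conv}(\{Q_{[t]},P_t\}\cup\{P_i:i\in J'\})$. Then $C_t\cap\mathbf{L}=\mathrm{conv}\{Q_{[t]},P_t\}$. -/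
theorem induced_cevian_is_intersection
    (n k l : ℕ) (hk1 : 1 ≤ k) (hkn : k ≤ n - 1) (hkl : k + l = n + 1)
    (P : Fin (n + 1) → EuclideanSpace ℝ (Fin n))
    (hP : AffineIndependent ℝ P)
    (J : Finset (Fin (n + 1))) (hJ : J.card = l + 1)
    (t : Fin (n + 1)) (ht : t ∈ J)
    (Qt : EuclideanSpace ℝ (Fin n))
    (hQt : Qt ∈ intrinsicInterior ℝ (convexHull ℝ (P '' ↑(J.erase t)))) :
    convexHull ℝ ({Qt, P t} ∪ P '' ↑Jᶜ) ∩ convexHull ℝ (P '' ↑J) =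
      segment ℝ Qt (P t) := by
  classical
  have hinj : Function.Injective P := hP.injective
  have hQt' : Qt ∈ convexHull ℝ (P '' ↑(J.erase t)) := intrinsicInterior_subset hQt
  have hQtspan : Qt ∈ affineSpan ℝ (P '' ↑(J.erase t)) :=
    convexHull_subset_affineSpan _ hQt'
  have hQtne : ∀ i : Fin (n + 1), i ∉ J.erase t → Qt ≠ P i := by
    intro i hi hEq
    have hsub : (↑(J.erase t) : Set (Fin (n + 1))) ⊆ Set.univ \ {i} := by
      intro j hj
      exact ⟨trivial, by rintro rfl; exact hi hj⟩
    exact hP.notMem_affineSpan_diff i Set.univ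
      (affineSpan_mono ℝ (Set.image_mono (f := P) hsub) (hEq ▸ hQtspan))
  have hQtnet : Qt ≠ P t := hQtne t (Finset.notMem_erase t J)
  have hPtA : P t ∉ Jᶜ.image P := by
    intro h
    obtain ⟨i, hi, hEq⟩ := Finset.mem_image.1 h
    exact Finset.mem_compl.1 hi (hinj hEq ▸ ht)
  have hQtA : Qt ∉ Jᶜ.image P := by
    intro h
    obtain ⟨i, hi, hEq⟩ := Finset.mem_image.1 h
    exact hQtne i (fun h' => Finset.mem_compl.1 hi (Finset.mem_of_mem_erase h')) hEq.symm
  apply Set.Subset.antisymm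
  · -- hard direction
    rintro x ⟨hx1, hx2⟩
    set S1 : Finset (EuclideanSpace ℝ (Fin n)) :=
      insert Qt (insert (P t) (Jᶜ.image P)) with hS1def
    have hS1 : (↑S1 : Set (EuclideanSpace ℝ (Fin n))) = {Qt, P t} ∪ P '' ↑Jᶜ := by
      simp [hS1def, Set.insert_union]
    rw [← hS1] at hx1
    obtain ⟨w, hw0, hw1, hwx⟩ := Finset.mem_convexHull'.1 hx1
    rw [show P '' ↑J = ↑(J.image P) from (Finset.coe_image).symm] at hx2
    obtain ⟨v, hv0, hv1, hvx⟩ := Finset.mem_convexHull'.1 hx2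
    rw [show P '' ↑(J.erase t) = ↑((J.erase t).image P) from (Finset.coe_image).symm] at hQt'
    obtain ⟨q, hq0, hq1, hqx⟩ := Finset.mem_convexHull'.1 hQt'
    have hQtS : Qt ∉ insert (P t) (Jᶜ.image P) := by
      simp [Finset.mem_insert, hQtnet, hQtA]
    rw [hS1def, Finset.sum_insert hQtS, Finset.sum_insert hPtA] at hw1 hwx
    have himg : ∀ {β : Type} [AddCommMonoid β] (s : Finset (Fin (n + 1)))
        (f : EuclideanSpace ℝ (Fin n) → β),
        ∑ y ∈ s.image P, f y = ∑ i ∈ s, f (P i) := by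
      intro β _ s f
      exact Finset.sum_image fun i _ j _ h => hinj h
    rw [himg] at hw1 hwx hq1 hqx hv1 hvx
    set a := w Qt with ha_def
    set b := w (P t) with hb_def
    set w1 : Fin (n + 1) → ℝ :=
      fun i => if i = t then b else if i ∈ J then a * q (P i) else w (P i) with hw1def
    set w2 : Fin (n + 1) → ℝ := fun i => if i ∈ J then v (P i) else 0 with hw2def
    have htne : ∀ i ∈ Jᶜ, i ≠ t := by
      intro i hi h; exact Finset.mem_compl.1 hi (h ▸ ht)
    have hW1 : ∑ i, w1 i = 1 := by
      rw [← Finset.sum_add_sum_compl J, ← Finset.add_sum_erase _ _ ht]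
      have h2 : ∑ i ∈ J.erase t, w1 i = a * (∑ i ∈ J.erase t, q (P i)) := by
        rw [Finset.mul_sum]
        refine Finset.sum_congr rfl fun i hi => ?_
        simp [hw1def, Finset.ne_of_mem_erase hi, Finset.mem_of_mem_erase hi]
      have h3 : ∑ i ∈ Jᶜ, w1 i = ∑ i ∈ Jᶜ, w (P i) := by
        refine Finset.sum_congr rfl fun i hi => ?_
        simp [hw1def, htne i hi, Finset.mem_compl.1 hi]
      have h1 : w1 t = b := by simp [hw1def]
      rw [h1, h2, h3, hq1]
      linarith
    have hW1x : ∑ i, w1 i • P i = x := by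
      rw [← Finset.sum_add_sum_compl J (fun i => w1 i • P i),
        ← Finset.add_sum_erase _ _ ht]
      have h2 : ∑ i ∈ J.erase t, w1 i • P i = a • Qt := by
        rw [← hqx, Finset.smul_sum]
        refine Finset.sum_congr rfl fun i hi => ?_
        simp only [hw1def]
        rw [if_neg (Finset.ne_of_mem_erase hi), if_pos (Finset.mem_of_mem_erase hi),
          mul_smul]
      have h3 : ∑ i ∈ Jᶜ, w1 i • P i = ∑ i ∈ Jᶜ, w (P i) • P i := by
        refine Finset.sum_congr rfl fun i hi => ?_
        simp only [hw1def]
        simp only [if_neg (htne i hi), if_neg (Finset.mem_compl.1 hi)]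
      have h1 : w1 t = b := by simp [hw1def]
      rw [h1, h2, h3, ← hwx]
      abel
    have hW2 : ∑ i, w2 i = 1 := by
      rw [← Finset.sum_add_sum_compl J]
      have h2 : ∑ i ∈ J, w2 i = ∑ i ∈ J, v (P i) :=
        Finset.sum_congr rfl fun i hi => by simp [hw2def, hi]
      have h3 : ∑ i ∈ Jᶜ, w2 i = 0 :=
        Finset.sum_eq_zero fun i hi => by simp [hw2def, Finset.mem_compl.1 hi]
      rw [h2, h3, hv1, add_zero]
    have hW2x : ∑ i, w2 i • P i = x := by
      rw [← Finset.sum_add_sum_compl J (fun i => w2 i • P i)]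
      have h2 : ∑ i ∈ J, w2 i • P i = ∑ i ∈ J, v (P i) • P i :=
        Finset.sum_congr rfl fun i hi => by simp [hw2def, hi]
      have h3 : ∑ i ∈ Jᶜ, w2 i • P i = 0 :=
        Finset.sum_eq_zero fun i hi => by simp [hw2def, Finset.mem_compl.1 hi]
      rw [h2, h3, hvx, add_zero]
    have hzero : ∀ i ∈ (Finset.univ : Finset (Fin (n + 1))), w1 i - w2 i = 0 := by
      apply hP.eq_zero_of_sum_eq_zero
      · rw [Finset.sum_sub_distrib, hW1, hW2, sub_self]
      · simp only [sub_smul]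
        rw [Finset.sum_sub_distrib, hW1x, hW2x, sub_self]
    have hwz : ∀ i ∈ Jᶜ, w (P i) = 0 := by
      intro i hi
      have h := hzero i (Finset.mem_univ i)
      simp only [hw1def, hw2def] at h
      simp only [if_neg (htne i hi), if_neg (Finset.mem_compl.1 hi)] at h
      linarith
    have hs0 : ∑ i ∈ Jᶜ, w (P i) = 0 := Finset.sum_eq_zero hwz
    have hsx0 : ∑ i ∈ Jᶜ, w (P i) • P i = 0 :=
      Finset.sum_eq_zero fun i hi => by rw [hwz i hi, zero_smul]
    rw [hs0] at hw1
    rw [hsx0] at hwx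
    refine ⟨a, b, hw0 Qt (Finset.mem_insert_self _ _),
      hw0 (P t) (Finset.mem_insert_of_mem (Finset.mem_insert_self _ _)), by linarith, ?_⟩
    rw [← hwx]; abel
  · -- easy direction
    intro z hz
    constructor
    · have h1 : z ∈ convexHull ℝ ({Qt, P t} : Set (EuclideanSpace ℝ (Fin n))) := by
        rw [convexHull_pair]; exact hz
      exact convexHull_mono Set.subset_union_left h1
    · have hQm : Qt ∈ convexHull ℝ (P '' ↑J) :=
        convexHull_mono (Set.image_mono (f := P) (by exact_mod_cast Finset.erase_subset t J)) hQt'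
      have hPm : P t ∈ convexHull ℝ (P '' ↑J) :=
        subset_convexHull ℝ _ ⟨t, ht, rfl⟩
      exact (convex_convexHull ℝ _).segment_subset hQm hPm hz
end

section
/- Let $P_0,\dots,P_n$ be affinely independent in $\mathbb{R}^n$ ($n\ge 2$). Suppose for every 2-element subset $\{i,j\}\subseteq\{0,\dots,n\}$ a parameter $s_{ij}\in(0,1)$ is given with $Q_{\{i,j\}}=(1-s_{ij})P_i+s_{ij}P_j$ for $i<j$, and suppose for every triple $i<j<k$ the relation $\frac{s_{ij}}{1-s_{ij}}\cdot\frac{s_{jk}}{1-s_{jk}}\cdot\frac{1-s_{ik}}{s_{ik}}=1$ holds. Then there exist weights $\alpha_0,\dots,\alpha_n>0$ with $\sum\alpha_i=1$ such that $s_{ij}=\frac{\alpha_j}{\alpha_i+\alpha_j}$ for all $i<j$. -/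
theorem ceva_relations_give_weights
    (n : ℕ) (hn : 2 ≤ n)
    (P : Fin (n + 1) → EuclideanSpace ℝ (Fin n))
    (hP : AffineIndependent ℝ P)
    (s : Fin (n + 1) → Fin (n + 1) → ℝ)
    (hs : ∀ i j : Fin (n + 1), i < j → s i j ∈ Set.Ioo (0 : ℝ) 1)
    (Q : Fin (n + 1) → Fin (n + 1) → EuclideanSpace ℝ (Fin n))
    (hQ : ∀ i j : Fin (n + 1), i < j → Q i j = (1 - s i j) • P i + s i j • P j)
    (hceva : ∀ i j k : Fin (n + 1), i < j → j < k →
      (s i j / (1 - s i j)) * (s j k / (1 - s j k)) * ((1 - s i k) / s i k) = 1) :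
    ∃ α : Fin (n + 1) → ℝ, (∀ i, 0 < α i) ∧ ∑ i, α i = 1 ∧
      ∀ i j : Fin (n + 1), i < j → s i j = α j / (α i + α j) := by
  set β : Fin (n + 1) → ℝ := fun i => if i = 0 then 1 else s 0 i / (1 - s 0 i) with hβ
  have hβpos : ∀ i, 0 < β i := by
    intro i
    by_cases h : i = 0
    · simp [hβ, h]
    · have hi : (0 : Fin (n + 1)) < i := Fin.pos_iff_ne_zero.mpr h
      obtain ⟨h1, h2⟩ := hs 0 i hi
      simp only [hβ, h, if_neg]
      exact div_pos h1 (by linarith)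
  -- key ratio identity
  have hr : ∀ i j : Fin (n + 1), i < j → s i j / (1 - s i j) = β j / β i := by
    intro i j hij
    by_cases h : i = 0
    · subst h
      have hj : j ≠ 0 := (Fin.pos_iff_ne_zero.mp hij)
      simp [hβ, hj]
    · have hi : (0 : Fin (n + 1)) < i := Fin.pos_iff_ne_zero.mpr h
      have hj : j ≠ 0 := Fin.pos_iff_ne_zero.mp (hi.trans hij)
      have hc := hceva 0 i j hi hij
      obtain ⟨h1i, h2i⟩ := hs 0 i hi
      obtain ⟨h1j, h2j⟩ := hs 0 j (hi.trans hij)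
      obtain ⟨h1ij, h2ij⟩ := hs i j hij
      simp only [hβ, h, hj, if_neg]
      have h3 : (1 : ℝ) - s 0 j ≠ 0 := by linarith
      have h4 : s 0 j ≠ 0 := ne_of_gt h1j
      have h5 : (1 : ℝ) - s 0 i ≠ 0 := by linarith
      have h6 : s 0 i ≠ 0 := ne_of_gt h1i
      have hd : ((1 - s 0 i) * (1 - s i j) * s 0 j : ℝ) ≠ 0 := by
        have : (1:ℝ) - s i j ≠ 0 := by linarith
        positivity
      have h7 : (1:ℝ) - s i j ≠ 0 := by linarith
      field_simp at hc
      simp only [if_false]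
      field_simp
      linear_combination hc
  have hskey : ∀ i j : Fin (n + 1), i < j → s i j = β j / (β i + β j) := by
    intro i j hij
    have h := hr i j hij
    obtain ⟨h1, h2⟩ := hs i j hij
    have hbi := hβpos i
    have hbj := hβpos j
    have h5 : (1 : ℝ) - s i j ≠ 0 := by linarith
    rw [div_eq_div_iff h5 (ne_of_gt hbi)] at h
    rw [eq_div_iff (by positivity)]
    nlinarith
  set T : ℝ := ∑ i, β i with hT
  have hTpos : 0 < T := Finset.sum_pos (fun i _ => hβpos i) Finset.univ_nonempty
  refine ⟨fun i => β i / T, fun i => div_pos (hβpos i) hTpos, ?_, ?_⟩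
  · rw [← Finset.sum_div, div_self (ne_of_gt hTpos)]
  · intro i j hij
    rw [hskey i j hij, ← add_div]
    have h1 : β i + β j ≠ 0 := by
      have := hβpos i; have := hβpos j; linarith
    have h2 : T ≠ 0 := ne_of_gt hTpos
    field_simp
end
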